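/- arXiv:2603.09429 — 8 statements merged into one kernel-verified Lean document; each statement's English description precedes it below -/
import Mathlib

section
/- Let n, m be natural numbers, let X ⊆ ℝ^n and A ⊆ ℝ^m be nonempty, compact, convex sets, and let L : ℝ^n × ℝ^m → ℝ be continuous on X × A, such that for each a ∈ A the function x ↦ L(x,a) is convex on X, and for each x ∈ X the function a ↦ L(x,a) is concave on A. Then strong duality holds: ⨅_{x ∈ X} ⨆_{a ∈ A} L(x,a) = ⨆_{a ∈ A} ⨅_{x ∈ X} L(x,a). -/
open Set

lemma sion_two_point {E F : Type*} [NormedAddCommGroup E] [NormedSpace ℝ E]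
    [NormedAddCommGroup F] [NormedSpace ℝ F]
    {X : Set E} {A : Set F} (hXcp : IsCompact X) (hXcv : Convex ℝ X) (hAcv : Convex ℝ A)
    (L : E → F → ℝ)
    (hLcont : ContinuousOn (fun p : E × F => L p.1 p.2) (X ×ˢ A))
    (hLconv : ∀ a ∈ A, ConvexOn ℝ X (fun x => L x a))
    (hLconc : ∀ x ∈ X, ConcaveOn ℝ A (fun a => L x a))
    {a1 a2 : F} (ha1 : a1 ∈ A) (ha2 : a2 ∈ A) {c c' : ℝ} (hcc : c < c')
    (hmax : ∀ x ∈ X, c' < max (L x a1) (L x a2)) :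
    ∃ a ∈ A, ∀ x ∈ X, c < L x a := by
  by_contra hcon
  push_neg at hcon
  -- hcon : ∀ a ∈ A, ∃ x ∈ X, L x a ≤ c
  set α : ℝ → F := fun t => (1 - t) • a1 + t • a2 with hαdef
  have hαA : ∀ t ∈ Icc (0:ℝ) 1, α t ∈ A := fun t ht =>
    hAcv ha1 ha2 (by linarith [ht.2]) ht.1 (by ring)
  have hα0 : α 0 = a1 := by simp [hαdef]
  have hα1 : α 1 = a2 := by simp [hαdef]
  set S : ℝ → Set E := fun t => {x ∈ X | L x (α t) ≤ c'} with hSdef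
  -- each S t is convex, closed
  have hLcontx : ∀ a ∈ A, ContinuousOn (fun x => L x a) X := by
    intro a ha
    have : ContinuousOn (fun x : E => (x, a)) X := by fun_prop
    exact hLcont.comp this fun x hx => ⟨hx, ha⟩
  have hScl : ∀ t ∈ Icc (0:ℝ) 1, IsClosed (S t) := by
    intro t ht
    have := (hLcontx _ (hαA t ht)).preimage_isClosed_of_isClosed hXcp.isClosed
      (isClosed_Iic (a := c'))
    have he : S t = X ∩ (fun x => L x (α t)) ⁻¹' Iic c' := by
      ext y; simp [hSdef, Set.mem_preimage]
    rw [he]; exact this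
  have hScv : ∀ t ∈ Icc (0:ℝ) 1, Convex ℝ (S t) := fun t ht =>
    (hLconv _ (hαA t ht)).convex_le c'
  -- nonempty witnesses at level c
  have hSne : ∀ t ∈ Icc (0:ℝ) 1, ∃ x ∈ X, L x (α t) ≤ c := fun t ht => hcon _ (hαA t ht)
  -- S t ⊆ S 0 ∪ S 1
  have hsub : ∀ t ∈ Icc (0:ℝ) 1, S t ⊆ S 0 ∪ S 1 := by
    intro t ht x hx
    obtain ⟨hxX, hxL⟩ := hx
    have hconc := (hLconc x hxX).2 ha1 ha2 (by linarith [ht.2] : (0:ℝ) ≤ 1 - t) ht.1 (by ring)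
    have hmin : min (L x a1) (L x a2) ≤ c' := by
      have h1 : min (L x a1) (L x a2) ≤ (1 - t) * L x a1 + t * L x a2 := by
        rcases le_total (L x a1) (L x a2) with h | h
        · rw [min_eq_left h]; nlinarith [ht.1, ht.2]
        · rw [min_eq_right h]; nlinarith [ht.1, ht.2]
      have h2 : (1 - t) * L x a1 + t * L x a2 ≤ L x (α t) := by
        simpa [smul_eq_mul] using hconc
      rw [hα0] at *
      linarith
    rcases min_le_iff.1 hmin with h | h
    · exact Or.inl ⟨hxX, by rwa [hα0]⟩
    · exact Or.inr ⟨hxX, by rwa [hα1]⟩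
  -- S 0 and S 1 are disjoint
  have hdisj : S 0 ∩ S 1 = ∅ := by
    ext x
    simp only [mem_inter_iff, mem_empty_iff_false, iff_false]
    rintro ⟨⟨hxX, h0⟩, ⟨_, h1⟩⟩
    rw [hα0] at h0; rw [hα1] at h1
    exact absurd (max_le h0 h1) (not_le.2 (hmax x hxX))
  -- key: limits
  have hkey : ∀ C : Set E, IsClosed C → (C = S 0 ∨ C = S 1) →
      IsClosed {t | t ∈ Icc (0:ℝ) 1 ∧ S t ⊆ C} := by
    intro C hCcl hCS
    rw [← isSeqClosed_iff_isClosed]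
    intro u t hu hut
    have htIcc : t ∈ Icc (0:ℝ) 1 := isClosed_Icc.mem_of_tendsto hut
      (Filter.Eventually.of_forall fun n => (hu n).1)
    obtain ⟨x, hxX, hxc⟩ := hSne t htIcc
    -- continuity of s ↦ L x (α s) on Icc 0 1
    have hφ : ContinuousOn (fun s => L x (α s)) (Icc (0:ℝ) 1) := by
      have h1 : ContinuousOn (fun s : ℝ => ((x, α s) : E × F)) (Icc (0:ℝ) 1) := by fun_prop
      exact hLcont.comp h1 fun s hs => ⟨hxX, hαA s hs⟩
    have htd : Filter.Tendsto (fun n => L x (α (u n))) Filter.atTop (nhds (L x (α t))) := by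
      refine ((hφ t htIcc).tendsto).comp ?_
      rw [tendsto_nhdsWithin_iff]
      exact ⟨hut, Filter.Eventually.of_forall fun n => (hu n).1⟩
    have hev : ∀ᶠ n in Filter.atTop, L x (α (u n)) < c' :=
      htd.eventually_lt_const (by linarith)
    obtain ⟨N, hN⟩ := hev.exists
    have hxC : x ∈ C := (hu N).2 ⟨hxX, le_of_lt hN⟩
    refine ⟨htIcc, ?_⟩
    -- S t is preconnected, contained in S0 ∪ S1, meets C; conclude S t ⊆ C
    have hpre := (hScv t htIcc).isPreconnected
    by_contra hnot
    -- then S t meets the other set too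
    have hC' : ∃ C' : Set E, IsClosed C' ∧ S t ⊆ C ∪ C' ∧ C ∩ C' = ∅ := by
      rcases hCS with rfl | rfl
      · exact ⟨S 1, hScl 1 (by norm_num), hsub t htIcc, hdisj⟩
      · refine ⟨S 0, hScl 0 (by norm_num), fun y hy => (hsub t htIcc hy).symm, ?_⟩
        rw [inter_comm]; exact hdisj
    obtain ⟨C', hC'cl, hcover, hCC'⟩ := hC'
    have hmeet' : (S t ∩ C').Nonempty := by
      rcases Set.not_subset.1 hnot with ⟨y, hyS, hyC⟩
      rcases hcover hyS with h | h
      · exact absurd h hyC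
      · exact ⟨y, hyS, h⟩
    have := isPreconnected_closed_iff.1 hpre C C' hCcl hC'cl hcover
      ⟨x, ⟨hxX, hxc.trans hcc.le⟩, hxC⟩ hmeet'
    obtain ⟨z, _, hz⟩ := this
    exact absurd hz (by simp [Set.eq_empty_iff_forall_notMem.1 hCC' z])
  -- dichotomy
  have hdich : ∀ t ∈ Icc (0:ℝ) 1, S t ⊆ S 0 ∨ S t ⊆ S 1 := by
    intro t ht
    by_cases h0 : (S t ∩ S 0).Nonempty
    · by_cases h1 : (S t ∩ S 1).Nonempty
      · exfalso
        obtain ⟨z, _, hz⟩ := isPreconnected_closed_iff.1 (hScv t ht).isPreconnected (S 0) (S 1)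
          (hScl 0 (by norm_num)) (hScl 1 (by norm_num)) (hsub t ht) h0 h1
        exact Set.eq_empty_iff_forall_notMem.1 hdisj z hz
      · left
        intro y hy
        rcases hsub t ht hy with h | h
        · exact h
        · exact absurd ⟨y, hy, h⟩ h1
    · right
      intro y hy
      rcases hsub t ht hy with h | h
      · exact absurd ⟨y, hy, h⟩ h0
      · exact h
  -- conclude by connectedness of Icc
  have hI := hkey (S 0) (hScl 0 (by norm_num)) (Or.inl rfl)
  have hJ := hkey (S 1) (hScl 1 (by norm_num)) (Or.inr rfl)
  have h0I : (0:ℝ) ∈ Icc (0:ℝ) 1 ∩ {t | t ∈ Icc (0:ℝ) 1 ∧ S t ⊆ S 0} :=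
    ⟨by norm_num, by norm_num, subset_rfl⟩
  have h1J : (1:ℝ) ∈ Icc (0:ℝ) 1 ∩ {t | t ∈ Icc (0:ℝ) 1 ∧ S t ⊆ S 1} :=
    ⟨by norm_num, by norm_num, subset_rfl⟩
  obtain ⟨t, _, ⟨htIcc, htS0⟩, ⟨_, htS1⟩⟩ := isPreconnected_closed_iff.1 isPreconnected_Icc
    _ _ hI hJ (fun t ht => by
      rcases hdich t ht with h | h
      · exact Or.inl ⟨ht, h⟩
      · exact Or.inr ⟨ht, h⟩) ⟨0, h0I⟩ ⟨1, h1J⟩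
  obtain ⟨x, hxX, hxc⟩ := hSne t htIcc
  have hxS : x ∈ S t := ⟨hxX, hxc.trans hcc.le⟩
  exact Set.eq_empty_iff_forall_notMem.1 hdisj x ⟨htS0 hxS, htS1 hxS⟩
lemma sion_finite {E F : Type*} [NormedAddCommGroup E] [NormedSpace ℝ E]
    [NormedAddCommGroup F] [NormedSpace ℝ F]
    {A : Set F} (hAne : A.Nonempty) (hAcv : Convex ℝ A) (L : E → F → ℝ)
    (as : List F) :
    ∀ (X : Set E), IsCompact X → Convex ℝ X →
    ContinuousOn (fun p : E × F => L p.1 p.2) (X ×ˢ A) →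
    (∀ a ∈ A, ConvexOn ℝ X (fun x => L x a)) →
    (∀ x ∈ X, ConcaveOn ℝ A (fun a => L x a)) →
    (∀ a ∈ as, a ∈ A) → ∀ {c c' : ℝ}, c < c' →
    (∀ x ∈ X, ∃ a ∈ as, c' < L x a) →
    ∃ a ∈ A, ∀ x ∈ X, c < L x a := by
  induction as with
  | nil =>
    intro X _ _ _ _ _ _ c c' _ hcov
    obtain ⟨a0, ha0⟩ := hAne
    refine ⟨a0, ha0, fun x hx => ?_⟩
    obtain ⟨a, ha, -⟩ := hcov x hx
    exact absurd ha List.not_mem_nil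
  | cons a0 rest ih =>
    intro X hXcp hXcv hLcont hLconv hLconc hmem c c' hcc hcov
    have ha0A : a0 ∈ A := hmem a0 List.mem_cons_self
    set c'' : ℝ := (c + c') / 2 with hc''
    have hcc1 : c < c'' := by rw [hc'']; linarith
    have hcc2 : c'' < c' := by rw [hc'']; linarith
    set X' : Set E := {x ∈ X | L x a0 ≤ c''} with hX'
    have hX'sub : X' ⊆ X := fun x hx => hx.1
    have hLcontx : ContinuousOn (fun x => L x a0) X := by
      have h1 : ContinuousOn (fun x : E => ((x, a0) : E × F)) X := by fun_prop
      exact hLcont.comp h1 fun x hx => ⟨hx, ha0A⟩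
    have hX'cl : IsClosed X' := by
      have := hLcontx.preimage_isClosed_of_isClosed hXcp.isClosed (isClosed_Iic (a := c''))
      have he : X' = X ∩ (fun x => L x a0) ⁻¹' Set.Iic c'' := by
        ext y; simp [hX', Set.mem_preimage]
      rw [he]; exact this
    have hX'cp : IsCompact X' := hXcp.of_isClosed_subset hX'cl hX'sub
    have hX'cv : Convex ℝ X' := (hLconv a0 ha0A).convex_le c''
    have hX'cov : ∀ x ∈ X', ∃ a ∈ rest, c' < L x a := by
      intro x hx
      obtain ⟨a, ha, hlt⟩ := hcov x hx.1
      rcases List.mem_cons.1 ha with rfl | ha'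
      · exact absurd hx.2 (by linarith)
      · exact ⟨a, ha', hlt⟩
    obtain ⟨a', ha'A, ha'⟩ := ih X' hX'cp hX'cv
      (hLcont.mono (Set.prod_mono hX'sub subset_rfl))
      (fun a ha => (hLconv a ha).subset hX'sub hX'cv)
      (fun x hx => hLconc x (hX'sub hx))
      (fun a ha => hmem a (List.mem_cons_of_mem a0 ha)) hcc2 hX'cov
    refine sion_two_point hXcp hXcv hAcv L hLcont hLconv hLconc ha'A ha0A hcc1 ?_
    intro x hx
    by_cases h : L x a0 ≤ c''
    · exact lt_max_of_lt_left (ha' x ⟨hx, h⟩)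
    · exact lt_max_of_lt_right (not_le.1 h)
/-- Minimax theorem (strong duality part): for nonempty compact convex sets
`X ⊆ ℝⁿ`, `A ⊆ ℝᵐ` and `L` continuous on `X × A`, convex in the first
variable and concave in the second, `inf sup = sup inf`. -/
theorem minimax_strong_duality {n m : ℕ}
    {X : Set (EuclideanSpace ℝ (Fin n))} {A : Set (EuclideanSpace ℝ (Fin m))}
    (hXne : X.Nonempty) (hXcp : IsCompact X) (hXcv : Convex ℝ X)
    (hAne : A.Nonempty) (hAcp : IsCompact A) (hAcv : Convex ℝ A)
    (L : EuclideanSpace ℝ (Fin n) → EuclideanSpace ℝ (Fin m) → ℝ)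
    (hLcont : ContinuousOn (fun p : EuclideanSpace ℝ (Fin n) × EuclideanSpace ℝ (Fin m) =>
      L p.1 p.2) (X ×ˢ A))
    (hLconv : ∀ a ∈ A, ConvexOn ℝ X (fun x => L x a))
    (hLconc : ∀ x ∈ X, ConcaveOn ℝ A (fun a => L x a)) :
    ⨅ x : X, ⨆ a : A, L x a = ⨆ a : A, ⨅ x : X, L x a := by
  have : Nonempty ↥X := hXne.to_subtype
  have : Nonempty ↥A := hAne.to_subtype
  obtain ⟨C, hC⟩ := (hXcp.prod hAcp).exists_bound_of_continuousOn hLcont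
  have hbd : ∀ x ∈ X, ∀ a ∈ A, |L x a| ≤ C := fun x hx a ha => by
    simpa [Real.norm_eq_abs] using hC (x, a) ⟨hx, ha⟩
  have hbdA : ∀ x : ↥X, BddAbove (Set.range fun a : ↥A => L x a) :=
    fun x => ⟨C, by rintro _ ⟨a, rfl⟩; exact (abs_le.1 (hbd x x.2 a a.2)).2⟩
  have hbdB : ∀ a : ↥A, BddBelow (Set.range fun x : ↥X => L x a) :=
    fun a => ⟨-C, by rintro _ ⟨x, rfl⟩; exact (abs_le.1 (hbd x x.2 a a.2)).1⟩
  have hbdg : BddBelow (Set.range fun x : ↥X => ⨆ a : ↥A, L x a) := by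
    refine ⟨-C, ?_⟩
    rintro _ ⟨x, rfl⟩
    obtain ⟨a0, ha0⟩ := hAne
    exact le_trans (abs_le.1 (hbd x x.2 a0 ha0)).1 (le_ciSup (hbdA x) ⟨a0, ha0⟩)
  have hbdh : BddAbove (Set.range fun a : ↥A => ⨅ x : ↥X, L x a) := by
    refine ⟨C, ?_⟩
    rintro _ ⟨a, rfl⟩
    obtain ⟨x0, hx0⟩ := hXne
    exact le_trans (ciInf_le (hbdB a) ⟨x0, hx0⟩) (abs_le.1 (hbd x0 hx0 a a.2)).2
  set P : ℝ := ⨅ x : ↥X, ⨆ a : ↥A, L x a with hP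
  set Q : ℝ := ⨆ a : ↥A, ⨅ x : ↥X, L x a with hQ
  have hQP : Q ≤ P := by
    refine le_ciInf fun x => ciSup_le fun a => ?_
    exact le_trans (ciInf_le (hbdB a) x) (le_ciSup (hbdA x) a)
  refine le_antisymm ?_ hQP
  by_contra hlt
  push_neg at hlt
  set c : ℝ := Q + (P - Q) / 3 with hc
  set c' : ℝ := Q + 2 * (P - Q) / 3 with hc'
  have hQc : Q < c := by rw [hc]; linarith
  have hcc : c < c' := by rw [hc, hc']; linarith
  have hc'P : c' < P := by rw [hc']; linarith
  -- for each x ∈ X there is a ∈ A with c' < L x a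
  have hwit : ∀ x ∈ X, ∃ a : ↥A, c' < L x ↑a := by
    intro x hx
    have h1 : P ≤ ⨆ a : ↥A, L x a := ciInf_le hbdg ⟨x, hx⟩
    exact exists_lt_of_lt_ciSup (lt_of_lt_of_le hc'P h1)
  -- open sets
  have hu : ∀ a : ↥A, ∃ u : Set (EuclideanSpace ℝ (Fin n)), IsOpen u ∧
      (fun x => L x ↑a) ⁻¹' Set.Ioi c' ∩ X = u ∩ X := by
    intro a
    have hcx : ContinuousOn (fun x => L x ↑a) X := by
      have h1 : ContinuousOn (fun x : EuclideanSpace ℝ (Fin n) =>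
        ((x, (a : EuclideanSpace ℝ (Fin m))) :
          EuclideanSpace ℝ (Fin n) × EuclideanSpace ℝ (Fin m))) X := by fun_prop
      exact hLcont.comp h1 fun x hx => ⟨hx, a.2⟩
    exact continuousOn_iff'.1 hcx _ isOpen_Ioi
  choose u huo hue using hu
  have hcov : X ⊆ ⋃ a : ↥A, u a := by
    intro x hx
    obtain ⟨a, ha⟩ := hwit x hx
    have : x ∈ (fun x => L x ↑a) ⁻¹' Set.Ioi c' ∩ X := ⟨ha, hx⟩
    rw [hue a] at this
    exact Set.mem_iUnion.2 ⟨a, this.1⟩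
  obtain ⟨t, ht⟩ := hXcp.elim_finite_subcover u huo hcov
  set as : List (EuclideanSpace ℝ (Fin m)) := t.toList.map Subtype.val with has
  have hmem : ∀ a ∈ as, a ∈ A := by
    intro a ha
    rw [has] at ha
    obtain ⟨b, -, rfl⟩ := List.mem_map.1 ha
    exact b.2
  have hcov' : ∀ x ∈ X, ∃ a ∈ as, c' < L x a := by
    intro x hx
    obtain ⟨a, hat, hau⟩ := Set.mem_iUnion₂.1 (ht hx)
    have : x ∈ (fun y => L y ↑a) ⁻¹' Set.Ioi c' ∩ X := by
      rw [hue a]; exact ⟨hau, hx⟩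
    refine ⟨↑a, ?_, this.1⟩
    rw [has]
    exact List.mem_map.2 ⟨a, (Finset.mem_toList).2 hat, rfl⟩
  obtain ⟨a, haA, halt⟩ := sion_finite hAne hAcv L as X hXcp hXcv hLcont hLconv hLconc
    hmem hcc hcov'
  have h1 : c ≤ ⨅ x : ↥X, L x a := le_ciInf fun x => (halt x x.2).le
  have h2 : (⨅ x : ↥X, L x a) ≤ Q := le_ciSup hbdh ⟨a, haA⟩
  linarith
end

section
/- Let n, m be natural numbers, let X ⊆ ℝ^n and A ⊆ ℝ^m be nonempty, compact, convex sets, and let L : ℝ^n × ℝ^m → ℝ be continuous on X × A, such that for each a ∈ A the function x ↦ L(x,a) is convex on X, and for each x ∈ X the function a ↦ L(x,a) is concave on A. Then there exists a saddle point (equilibrium): points x* ∈ X and a* ∈ A such that for all x ∈ X and all a ∈ A, L(x*, a) ≤ L(x*, a*) ≤ L(x, a*). -/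
set_option linter.unusedSectionVars false

open Set Filter Topology

section MinimaxAux

variable {E F : Type*} [NormedAddCommGroup E] [NormedSpace ℝ E]
  [NormedAddCommGroup F] [NormedSpace ℝ F]

/-- Sublevel sets of a function continuous on a compact set are compact. -/
lemma minimax_sublevel_compact {X' : Set E} (hcp : IsCompact X') {f : E → ℝ}
    (hf : ContinuousOn f X') (β : ℝ) : IsCompact {x ∈ X' | f x ≤ β} := by
  have h : {x ∈ X' | f x ≤ β} = X' ∩ f ⁻¹' Iic β := by
    ext x; exact ⟨fun h => ⟨h.1, h.2⟩, fun h => ⟨h.1, h.2⟩⟩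
  rw [h]
  exact hcp.of_isClosed_subset
    (hf.preimage_isClosed_of_isClosed hcp.isClosed isClosed_Iic) inter_subset_left

/-- Komiya's two-point lemma. -/
lemma komiya_pair {X A : Set E} {B : Set F}
    {L : E → F → ℝ}
    (hBcv : Convex ℝ B)
    (contx : ∀ a ∈ B, ContinuousOn (fun x => L x a) X)
    (conty : ∀ x ∈ X, ContinuousOn (fun a => L x a) B)
    (hLconv : ∀ a ∈ B, ConvexOn ℝ X (fun x => L x a))
    (hLconc : ∀ x ∈ X, ConcaveOn ℝ B (fun a => L x a))
    (hX'sub : A ⊆ X) (hX'cp : IsCompact A) (hX'cv : Convex ℝ A)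
    {y1 y2 : F} (hy1 : y1 ∈ B) (hy2 : y2 ∈ B) {α β : ℝ} (hαβ : α < β)
    (hsep : ∀ x ∈ A, β < max (L x y1) (L x y2)) :
    ∃ z ∈ B, ∀ x ∈ A, α < L x z := by
  by_contra hcon
  push_neg at hcon
  have hseg : segment ℝ y1 y2 ⊆ B := hBcv.segment_subset hy1 hy2
  set C : F → Set E := fun z => {x ∈ A | L x z ≤ β} with hC
  have hCcp : ∀ z ∈ B, IsCompact (C z) := fun z hz =>
    minimax_sublevel_compact hX'cp ((contx z hz).mono hX'sub) β
  have hCcv : ∀ z ∈ B, Convex ℝ (C z) := fun z hz =>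
    ((hLconv z hz).subset hX'sub hX'cv).convex_le β
  have hdisj : ∀ x, x ∈ C y1 → x ∈ C y2 → False := by
    intro x h1 h2
    have := hsep x h1.1
    rcases max_cases (L x y1) (L x y2) with ⟨he, _⟩ | ⟨he, _⟩ <;> rw [he] at this <;> linarith [h1.2, h2.2]
  have hcover : ∀ z ∈ segment ℝ y1 y2, C z ⊆ C y1 ∪ C y2 := by
    intro z hz x hx
    have hm : min (L x y1) (L x y2) ≤ L x z :=
      (hLconc x (hX'sub hx.1)).ge_on_segment hy1 hy2 hz
    rcases min_cases (L x y1) (L x y2) with ⟨he, _⟩ | ⟨he, _⟩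
    · exact Or.inl ⟨hx.1, by linarith [hx.2]⟩
    · exact Or.inr ⟨hx.1, by linarith [hx.2]⟩
  have hdich : ∀ z ∈ segment ℝ y1 y2, C z ⊆ C y1 ∨ C z ⊆ C y2 := by
    intro z hz
    by_contra hc
    push_neg at hc
    obtain ⟨w1, hw1C, hw1⟩ := not_subset.1 hc.1
    obtain ⟨w2, hw2C, hw2⟩ := not_subset.1 hc.2
    have hpre := (hCcv z (hseg hz)).isPreconnected
    have h1o : IsOpen (C y1)ᶜ := (hCcp y1 hy1).isClosed.isOpen_compl
    have h2o : IsOpen (C y2)ᶜ := (hCcp y2 hy2).isClosed.isOpen_compl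
    have hsub2 : C z ⊆ (C y2)ᶜ ∪ (C y1)ᶜ := by
      intro x hx
      rcases hcover z hz hx with h | h
      · exact Or.inl (fun h2 => hdisj x h h2)
      · exact Or.inr (fun h1 => hdisj x h1 h)
    have hne1 : (C z ∩ (C y2)ᶜ).Nonempty := ⟨w2, hw2C, hw2⟩
    have hne2 : (C z ∩ (C y1)ᶜ).Nonempty := ⟨w1, hw1C, hw1⟩
    obtain ⟨x, hxz, hx2, hx1⟩ := hpre _ _ h2o h1o hsub2 hne1 hne2
    rcases hcover z hz hxz with h | h
    · exact hx1 h
    · exact hx2 h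
  set p : ℝ → F := fun t => (1 - t) • y1 + t • y2 with hpdef
  have hpc : Continuous p := by fun_prop
  have hpmem : ∀ t ∈ Icc (0:ℝ) 1, p t ∈ segment ℝ y1 y2 := by
    intro t ht
    rw [segment_eq_image ℝ y1 y2]
    exact ⟨t, ht, rfl⟩
  have hwit : ∀ t ∈ Icc (0:ℝ) 1, ∃ x ∈ C (p t), L x (p t) ≤ α := by
    intro t ht
    obtain ⟨x, hx, hxα⟩ := hcon (p t) (hseg (hpmem t ht))
    exact ⟨x, ⟨hx, le_of_lt (lt_of_le_of_lt hxα hαβ)⟩, hxα⟩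
  -- closedness of the two pieces
  have key : ∀ D : Set E, (∀ z ∈ segment ℝ y1 y2, C z ⊆ D ∨ ∀ x ∈ C z, x ∉ D) →
      IsClosed {t | t ∈ Icc (0:ℝ) 1 ∧ C (p t) ⊆ D} := by
    intro D hD
    apply IsSeqClosed.isClosed
    intro ts t hts hlim
    have ht : t ∈ Icc (0:ℝ) 1 := isClosed_Icc.isSeqClosed (fun k => (hts k).1) hlim
    obtain ⟨x, hxC, hxα⟩ := hwit t ht
    have hx' : x ∈ A := hxC.1
    have htend : Tendsto (fun k => L x (p (ts k))) atTop (𝓝 (L x (p t))) := by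
      have h1 : Tendsto (fun k => p (ts k)) atTop (𝓝[B] (p t)) := by
        rw [tendsto_nhdsWithin_iff]
        exact ⟨(hpc.tendsto t).comp hlim,
          Eventually.of_forall fun k => hseg (hpmem _ (hts k).1)⟩
      exact ((conty x (hX'sub hx')) (p t) (hseg (hpmem t ht))).tendsto.comp h1
    have hev : ∀ᶠ k in atTop, L x (p (ts k)) < β :=
      htend.eventually_lt_const (lt_of_le_of_lt hxα hαβ)
    obtain ⟨k, hk⟩ := hev.exists
    have hxD : x ∈ D := (hts k).2 ⟨hx', le_of_lt hk⟩
    refine ⟨ht, ?_⟩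
    rcases hD (p t) (hpmem t ht) with h | h
    · exact h
    · exact absurd hxD (h x hxC)
  have hS1 : IsClosed {t | t ∈ Icc (0:ℝ) 1 ∧ C (p t) ⊆ C y1} := by
    apply key
    intro z hz
    rcases hdich z hz with h | h
    · exact Or.inl h
    · exact Or.inr fun x hx h1 => hdisj x h1 (h hx)
  have hS2 : IsClosed {t | t ∈ Icc (0:ℝ) 1 ∧ C (p t) ⊆ C y2} := by
    apply key
    intro z hz
    rcases hdich z hz with h | h
    · exact Or.inr fun x hx h2 => hdisj x (h hx) h2
    · exact Or.inl h
  set S1 := {t | t ∈ Icc (0:ℝ) 1 ∧ C (p t) ⊆ C y1}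
  set S2 := {t | t ∈ Icc (0:ℝ) 1 ∧ C (p t) ⊆ C y2}
  have hp0 : p 0 = y1 := by simp [hpdef]
  have hp1 : p 1 = y2 := by simp [hpdef]
  have hdisjS : ∀ t, t ∈ S1 → t ∈ S2 → False := by
    intro t ht1 ht2
    obtain ⟨x, hxC, -⟩ := hwit t ht1.1
    exact hdisj x (ht1.2 hxC) (ht2.2 hxC)
  have h0S1 : (0:ℝ) ∈ S1 := ⟨⟨le_refl 0, zero_le_one⟩, by rw [hp0]⟩
  have h1S2 : (1:ℝ) ∈ S2 := ⟨⟨zero_le_one, le_refl 1⟩, by rw [hp1]⟩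
  have hIccsub : Icc (0:ℝ) 1 ⊆ S2ᶜ ∪ S1ᶜ := by
    intro t ht
    rcases hdich (p t) (hpmem t ht) with h | h
    · exact Or.inl fun h2 => hdisjS t ⟨ht, h⟩ h2
    · exact Or.inr fun h1 => hdisjS t h1 ⟨ht, h⟩
  obtain ⟨t, htI, ht2, ht1⟩ := (isPreconnected_Icc (a := (0:ℝ)) (b := 1)) _ _
    hS2.isOpen_compl hS1.isOpen_compl hIccsub
    ⟨0, ⟨le_refl 0, zero_le_one⟩, fun h => hdisjS 0 h0S1 h⟩
    ⟨1, ⟨zero_le_one, le_refl 1⟩, fun h => hdisjS 1 h h1S2⟩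
  rcases hdich (p t) (hpmem t htI) with h | h
  · exact ht1 ⟨htI, h⟩
  · exact ht2 ⟨htI, h⟩

/-- Komiya's finite lemma. -/
lemma komiya_list {X : Set E} {B : Set F} {L : E → F → ℝ}
    (hBne : B.Nonempty) (hBcv : Convex ℝ B)
    (contx : ∀ a ∈ B, ContinuousOn (fun x => L x a) X)
    (conty : ∀ x ∈ X, ContinuousOn (fun a => L x a) B)
    (hLconv : ∀ a ∈ B, ConvexOn ℝ X (fun x => L x a))
    (hLconc : ∀ x ∈ X, ConcaveOn ℝ B (fun a => L x a)) :
    ∀ (ys : List F), (∀ y ∈ ys, y ∈ B) →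
    ∀ (X' : Set E), X' ⊆ X → IsCompact X' → Convex ℝ X' →
    ∀ α β : ℝ, α < β → (∀ x ∈ X', ∃ y ∈ ys, β < L x y) →
    ∃ z ∈ B, ∀ x ∈ X', α < L x z := by
  intro ys
  induction ys with
  | nil =>
    intro _ X' _ _ _ α β _ hcov
    rcases X'.eq_empty_or_nonempty with he | ⟨x, hx⟩
    · obtain ⟨b, hb⟩ := hBne
      exact ⟨b, hb, by simp [he]⟩
    · obtain ⟨y, hy, -⟩ := hcov x hx
      exact absurd hy List.not_mem_nil
  | cons y ys ih =>
    intro hmem X' hsub hcp hcv α β hαβ hcov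
    have hyB : y ∈ B := hmem y List.mem_cons_self
    set γ := (α + β) / 2 with hγ
    have hαγ : α < γ := by rw [hγ]; linarith
    have hγβ : γ < β := by rw [hγ]; linarith
    set X'' := {x ∈ X' | L x y ≤ γ} with hX''
    have hX''sub : X'' ⊆ X' := fun x hx => hx.1
    have hX''cp : IsCompact X'' :=
      minimax_sublevel_compact hcp ((contx y hyB).mono hsub) γ
    have hX''cv : Convex ℝ X'' := ((hLconv y hyB).subset hsub hcv).convex_le γ
    have hcov'' : ∀ x ∈ X'', ∃ y' ∈ ys, β < L x y' := by
      intro x hx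
      obtain ⟨y', hy', hβ⟩ := hcov x hx.1
      rcases List.mem_cons.1 hy' with rfl | h
      · exact absurd hβ (by push_neg; linarith [hx.2])
      · exact ⟨y', h, hβ⟩
    obtain ⟨z', hz'B, hz'⟩ := ih (fun y' h => hmem y' (List.mem_cons_of_mem y h))
      X'' (hX''sub.trans hsub) hX''cp hX''cv γ β hγβ hcov''
    have hsep : ∀ x ∈ X', γ < max (L x z') (L x y) := by
      intro x hx
      rcases le_or_gt (L x y) γ with h | h
      · exact lt_max_of_lt_left (hz' x ⟨hx, h⟩)
      · exact lt_max_of_lt_right h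
    exact komiya_pair hBcv contx conty hLconv hLconc hsub hcp hcv hz'B hyB hαγ hsep

end MinimaxAux

/-- Minimax theorem (equilibrium part): for nonempty compact convex sets
`X ⊆ ℝⁿ`, `A ⊆ ℝᵐ` and `L` continuous on `X × A`, convex in the first
variable and concave in the second, a saddle point exists. -/
theorem minimax_saddle_point {n m : ℕ}
    {X : Set (EuclideanSpace ℝ (Fin n))} {A : Set (EuclideanSpace ℝ (Fin m))}
    (hXne : X.Nonempty) (hXcp : IsCompact X) (hXcv : Convex ℝ X)
    (hAne : A.Nonempty) (hAcp : IsCompact A) (hAcv : Convex ℝ A)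
    (L : EuclideanSpace ℝ (Fin n) → EuclideanSpace ℝ (Fin m) → ℝ)
    (hLcont : ContinuousOn (fun p : EuclideanSpace ℝ (Fin n) × EuclideanSpace ℝ (Fin m) =>
      L p.1 p.2) (X ×ˢ A))
    (hLconv : ∀ a ∈ A, ConvexOn ℝ X (fun x => L x a))
    (hLconc : ∀ x ∈ X, ConcaveOn ℝ A (fun a => L x a)) :
    ∃ xs ∈ X, ∃ as ∈ A, ∀ x ∈ X, ∀ a ∈ A,
      L xs a ≤ L xs as ∧ L xs as ≤ L x as := by
  obtain ⟨x0, hx0⟩ := hXne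
  have contx : ∀ a ∈ A, ContinuousOn (fun x => L x a) X := by
    intro a ha
    exact hLcont.comp ((continuous_id.prodMk continuous_const).continuousOn)
      (fun x hx => ⟨hx, ha⟩)
  have conty : ∀ x ∈ X, ContinuousOn (fun a => L x a) A := by
    intro x hx
    exact hLcont.comp ((continuous_const.prodMk continuous_id).continuousOn)
      (fun a ha => ⟨hx, ha⟩)
  have hminex : ∀ a ∈ A, ∃ x ∈ X, ∀ x' ∈ X, L x a ≤ L x' a := by
    intro a ha
    obtain ⟨x, hxX, hmin⟩ := hXcp.exists_isMinOn ⟨x0, hx0⟩ (contx a ha)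
    exact ⟨x, hxX, fun x' hx' => hmin hx'⟩
  choose! μ hμX hμ using hminex
  set ψ : EuclideanSpace ℝ (Fin m) → ℝ := fun a => L (μ a) a with hψ
  obtain ⟨a1, ha1, hmax1⟩ := hAcp.exists_isMaxOn hAne (conty x0 hx0)
  have hbdd : BddAbove (ψ '' A) := by
    refine ⟨L x0 a1, ?_⟩
    rintro r ⟨a, ha, rfl⟩
    exact le_trans (hμ a ha x0 hx0) (hmax1 ha)
  have hne' : (ψ '' A).Nonempty := hAne.image ψ
  set M := sSup (ψ '' A) with hM
  have hseq : ∀ k : ℕ, ∃ a ∈ A, M - 1/(k+1) < ψ a := by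
    intro k
    have hlt : M - 1/((k:ℝ)+1) < M := by
      have : (0:ℝ) < 1/((k:ℝ)+1) := by positivity
      linarith
    obtain ⟨r, ⟨a, ha, rfl⟩, hr⟩ := exists_lt_of_lt_csSup hne' hlt
    exact ⟨a, ha, hr⟩
  choose aseq haseqA haseq using hseq
  obtain ⟨as, hasA, φ, hφ, hconv⟩ := hAcp.tendsto_subseq haseqA
  have hMas : M ≤ ψ as := by
    have htend : Tendsto (fun k => L (μ as) (aseq (φ k))) atTop (𝓝 (L (μ as) as)) := by
      have h1 : Tendsto (fun k => aseq (φ k)) atTop (𝓝[A] as) := by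
        rw [tendsto_nhdsWithin_iff]
        exact ⟨hconv, Eventually.of_forall fun k => haseqA _⟩
      exact ((conty (μ as) (hμX as hasA)) as hasA).tendsto.comp h1
    have hlow : Tendsto (fun k : ℕ => M - 1/((k:ℝ)+1)) atTop (𝓝 M) := by
      have h0 : Tendsto (fun k : ℕ => 1/((k:ℝ)+1)) atTop (𝓝 0) :=
        tendsto_one_div_add_atTop_nhds_zero_nat
      have := (tendsto_const_nhds (x := M) (f := (atTop : Filter ℕ))).sub h0
      simpa using this
    refine le_of_tendsto_of_tendsto' hlow htend fun k => ?_
    have hkφ : (k:ℝ) + 1 ≤ (φ k : ℝ) + 1 := by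
      have := hφ.le_apply (x := k)
      have : (k:ℝ) ≤ (φ k : ℝ) := by exact_mod_cast this
      linarith
    have hdiv : 1/((φ k : ℝ)+1) ≤ 1/((k:ℝ)+1) :=
      one_div_le_one_div_of_le (by positivity) hkφ
    calc M - 1/((k:ℝ)+1) ≤ M - 1/((φ k:ℝ)+1) := by linarith
      _ ≤ ψ (aseq (φ k)) := le_of_lt (haseq (φ k))
      _ ≤ L (μ as) (aseq (φ k)) := hμ _ (haseqA _) _ (hμX as hasA)
  have hasmax : ∀ a ∈ A, ψ a ≤ ψ as := fun a ha =>
    le_trans (le_csSup hbdd ⟨a, ha, rfl⟩) hMas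
  set v := ψ as with hv
  have hclaim : ∀ (ys : List (EuclideanSpace ℝ (Fin m))), (∀ y ∈ ys, y ∈ A) →
      ∀ ε : ℝ, 0 < ε → ∃ x ∈ X, ∀ y ∈ ys, L x y ≤ v + ε := by
    intro ys hys ε hε
    by_contra hcon
    push_neg at hcon
    have hcov : ∀ x ∈ X, ∃ y ∈ ys, v + ε < L x y := by
      intro x hx
      obtain ⟨y, hy, hlt⟩ := hcon x hx
      exact ⟨y, hy, hlt⟩
    obtain ⟨z, hzA, hz⟩ := komiya_list hAne hAcv contx conty hLconv hLconc ys hys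
      X subset_rfl hXcp hXcv v (v + ε) (lt_add_of_pos_right v hε) hcov
    have h1 : v < ψ z := hz (μ z) (hμX z hzA)
    have h2 : ψ z ≤ v := hasmax z hzA
    linarith
  -- finite intersection property for the sublevel sets at level v
  have hFIP : ∀ S : Finset ↥A,
      (X ∩ ⋂ a ∈ S, (X ∩ {x | L x ↑a ≤ v})).Nonempty := by
    intro S
    set K : ℕ → Set (EuclideanSpace ℝ (Fin n)) :=
      fun k => X ∩ ⋂ a ∈ S, (X ∩ {x | L x ↑a ≤ v + 1/((k:ℝ)+1)}) with hK
    have hKcl : ∀ k, IsClosed (K k) := by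
      intro k
      refine hXcp.isClosed.inter (isClosed_biInter fun a _ => ?_)
      exact (contx ↑a a.2).preimage_isClosed_of_isClosed hXcp.isClosed isClosed_Iic
    have hKne : ∀ k, (K k).Nonempty := by
      intro k
      obtain ⟨x, hxX, hx⟩ := hclaim (S.toList.map Subtype.val)
        (by
          intro y hy
          obtain ⟨a, -, rfl⟩ := List.mem_map.1 hy
          exact a.2)
        (1/((k:ℝ)+1)) (by positivity)
      refine ⟨x, hxX, mem_biInter fun a haS => ⟨hxX, ?_⟩⟩
      exact hx ↑a (List.mem_map.2 ⟨a, Finset.mem_toList.2 haS, rfl⟩)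
    have hKdec : ∀ k, K (k+1) ⊆ K k := by
      intro k x hx
      refine ⟨hx.1, mem_biInter fun a haS => ?_⟩
      have hxk := mem_iInter₂.1 hx.2 a haS
      refine ⟨hxk.1, show L x ↑a ≤ _ from le_trans hxk.2 ?_⟩
      have : 1/((k:ℝ)+1+1) ≤ 1/((k:ℝ)+1) :=
        one_div_le_one_div_of_le (by positivity) (by linarith)
      push_cast
      linarith
    obtain ⟨x, hx⟩ := IsCompact.nonempty_iInter_of_sequence_nonempty_isCompact_isClosed
      K hKdec hKne (hXcp.of_isClosed_subset (hKcl 0) inter_subset_left) hKcl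
    have hxX : x ∈ X := (mem_iInter.1 hx 0).1
    refine ⟨x, hxX, mem_biInter fun a haS => ⟨hxX, ?_⟩⟩
    have hall : ∀ k : ℕ, L x ↑a ≤ v + 1/((k:ℝ)+1) := fun k =>
      (mem_iInter₂.1 (mem_iInter.1 hx k).2 a haS).2
    show L x ↑a ≤ v
    refine le_of_forall_pos_le_add fun ε hε => ?_
    obtain ⟨k, hk⟩ := exists_nat_one_div_lt hε
    exact le_trans (hall k) (by linarith [hk])
  obtain ⟨xs, hxsX, hxs⟩ := hXcp.inter_iInter_nonempty
    (fun a : ↥A => X ∩ {x | L x ↑a ≤ v})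
    (fun a => (contx ↑a a.2).preimage_isClosed_of_isClosed hXcp.isClosed isClosed_Iic)
    hFIP
  have hxsv : ∀ a ∈ A, L xs a ≤ v := fun a ha =>
    (mem_iInter.1 hxs ⟨a, ha⟩).2
  have hvxs : v ≤ L xs as := hμ as hasA xs hxsX
  have heq : L xs as = v := le_antisymm (hxsv as hasA) hvxs
  refine ⟨xs, hxsX, as, hasA, fun x hx a ha => ⟨?_, ?_⟩⟩
  · rw [heq]; exact hxsv a ha
  · rw [heq]; exact hμ as hasA x hx
end

section
/- Let L : [0,1] × [0,1] → ℝ be a continuous function such that for each fixed θ ∈ [0,1] the function s ↦ L(s,θ) is convex on [0,1], and for each fixed s ∈ [0,1] the function θ ↦ L(s,θ) is concave on [0,1]. Then ⨅_{s ∈ [0,1]} ⨆_{θ ∈ [0,1]} L(s,θ) = ⨆_{θ ∈ [0,1]} ⨅_{s ∈ [0,1]} L(s,θ). -/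
open Set

private lemma precon_closed {A B₁ B₂ : Set ℝ} (hA : IsPreconnected A)
    (h1 : IsClosed B₁) (h2 : IsClosed B₂) (hd : Disjoint B₁ B₂)
    (hsub : A ⊆ B₁ ∪ B₂) : A ⊆ B₁ ∨ A ⊆ B₂ := by
  obtain ⟨U, V, hU, hV, hB1U, hB2V, hUV⟩ := NormalSpace.normal B₁ B₂ h1 h2 hd
  rcases IsPreconnected.subset_or_subset hU hV hUV
      (hsub.trans (union_subset_union hB1U hB2V)) hA with h | h
  · left; intro a ha
    rcases hsub ha with h' | h'
    · exact h'
    · exact absurd (hB2V h') (fun hv => (Set.disjoint_left.mp hUV (h ha)) hv)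
  · right; intro a ha
    rcases hsub ha with h' | h'
    · exact absurd (hB1U h') (fun hu => (Set.disjoint_left.mp hUV hu) (h ha))
    · exact h'

private lemma two_point (L : ℝ → ℝ → ℝ)
    (hLcont : ContinuousOn (fun p : ℝ × ℝ => L p.1 p.2)
      (Set.Icc (0 : ℝ) 1 ×ˢ Set.Icc (0 : ℝ) 1))
    (hLconv : ∀ θ ∈ Set.Icc (0 : ℝ) 1, ConvexOn ℝ (Set.Icc (0 : ℝ) 1) (fun s => L s θ))
    (hLconc : ∀ s ∈ Set.Icc (0 : ℝ) 1, ConcaveOn ℝ (Set.Icc (0 : ℝ) 1) (fun θ => L s θ))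
    (S : Set ℝ) (hSsub : S ⊆ Icc (0:ℝ) 1) (hScl : IsClosed S) (hSconv : Convex ℝ S)
    (θ₁ θ₂ : ℝ) (hθ1 : θ₁ ∈ Icc (0:ℝ) 1) (hθ2 : θ₂ ∈ Icc (0:ℝ) 1) (c : ℝ)
    (hc : ∀ s ∈ S, c < max (L s θ₁) (L s θ₂)) :
    ∃ θ₀ ∈ Icc (0:ℝ) 1, ∀ s ∈ S, c < L s θ₀ := by
  have contS : ∀ θ ∈ Icc (0:ℝ) 1, ContinuousOn (fun s => L s θ) (Icc (0:ℝ) 1) := by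
    intro θ hθ
    exact hLcont.comp (Continuous.continuousOn (by fun_prop))
      (fun s hs => Set.mk_mem_prod hs hθ)
  by_contra hcon
  push_neg at hcon
  -- hcon : ∀ θ₀ ∈ Icc 0 1, ∃ s ∈ S, L s θ₀ ≤ c
  obtain ⟨s₀, hs₀S, _⟩ := hcon θ₁ hθ1
  have hScomp : IsCompact S := isCompact_Icc.of_isClosed_subset hScl hSsub
  have hmaxcont : ContinuousOn (fun s => max (L s θ₁) (L s θ₂)) S :=
    continuous_max.comp_continuousOn
      (((contS θ₁ hθ1).mono hSsub).prodMk ((contS θ₂ hθ2).mono hSsub))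
  obtain ⟨sm, hsmS, hsm⟩ := hScomp.exists_isMinOn ⟨s₀, hs₀S⟩ hmaxcont
  set m := max (L sm θ₁) (L sm θ₂) with hm_def
  have hcm : c < m := hc sm hsmS
  set c'' := (c + m) / 2 with hc''_def
  have hc1 : c < c'' := by simp only [hc''_def]; linarith
  have hc2 : c'' < m := by simp only [hc''_def]; linarith
  have hSm : ∀ s ∈ S, c'' < max (L s θ₁) (L s θ₂) :=
    fun s hs => lt_of_lt_of_le hc2 (isMinOn_iff.mp hsm s hs)
  set θf : ℝ → ℝ := fun t => (1 - t) * θ₁ + t * θ₂ with hθf_def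
  have hθfK : ∀ t ∈ Icc (0:ℝ) 1, θf t ∈ Icc (0:ℝ) 1 := by
    intro t ht
    obtain ⟨ht0, ht1⟩ := ht
    obtain ⟨h10, h11⟩ := hθ1
    obtain ⟨h20, h21⟩ := hθ2
    simp only [hθf_def]
    constructor
    · nlinarith
    · nlinarith
  set B : ℝ → Set ℝ := fun t => {s ∈ S | L s (θf t) ≤ c''} with hB_def
  have hBcl : ∀ t ∈ Icc (0:ℝ) 1, IsClosed (B t) := by
    intro t ht
    have : B t = S ∩ (fun s => L s (θf t)) ⁻¹' Iic c'' := by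
      ext x; simp [hB_def]
    rw [this]
    exact ((contS _ (hθfK t ht)).mono hSsub).preimage_isClosed_of_isClosed hScl isClosed_Iic
  have hBconv : ∀ t ∈ Icc (0:ℝ) 1, Convex ℝ (B t) := by
    intro t ht
    have : B t = S ∩ {x | x ∈ Icc (0:ℝ) 1 ∧ L x (θf t) ≤ c''} := by
      ext x
      constructor
      · rintro ⟨hxS, hx⟩; exact ⟨hxS, hSsub hxS, hx⟩
      · rintro ⟨hxS, _, hx⟩; exact ⟨hxS, hx⟩
    rw [this]
    exact hSconv.inter ((hLconv _ (hθfK t ht)).convex_le c'')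
  have hBne : ∀ t ∈ Icc (0:ℝ) 1, (B t).Nonempty := by
    intro t ht
    obtain ⟨s, hsS, hs⟩ := hcon (θf t) (hθfK t ht)
    exact ⟨s, hsS, hs.trans hc1.le⟩
  have hθf0 : θf 0 = θ₁ := by simp [hθf_def]
  have hθf1 : θf 1 = θ₂ := by simp [hθf_def]
  have hB01 : Disjoint (B 0) (B 1) := by
    rw [Set.disjoint_left]
    rintro s ⟨hsS, hs0⟩ ⟨_, hs1⟩
    rw [hθf0] at hs0; rw [hθf1] at hs1
    have := hSm s hsS
    rcases max_cases (L s θ₁) (L s θ₂) with ⟨he, _⟩ | ⟨he, _⟩ <;> rw [he] at this <;> linarith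
  have hBsub : ∀ t ∈ Icc (0:ℝ) 1, B t ⊆ B 0 ∪ B 1 := by
    intro t ht s hs
    obtain ⟨hsS, hsle⟩ := hs
    have hconc := (hLconc s (hSsub hsS)).2 hθ1 hθ2 (by linarith [ht.2] : (0:ℝ) ≤ 1 - t)
      ht.1 (by ring)
    simp only [smul_eq_mul] at hconc
    -- hconc : (1-t) * L s θ₁ + t * L s θ₂ ≤ L s (θf t)
    rcases le_total (L s θ₁) (L s θ₂) with hle | hle
    · left
      refine ⟨hsS, ?_⟩
      rw [hθf0]
      nlinarith [ht.1, ht.2]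
    · right
      refine ⟨hsS, ?_⟩
      rw [hθf1]
      nlinarith [ht.1, ht.2]
  have hdich : ∀ t ∈ Icc (0:ℝ) 1, B t ⊆ B 0 ∨ B t ⊆ B 1 := by
    intro t ht
    exact precon_closed (hBconv t ht).isPreconnected
      (hBcl 0 (by norm_num)) (hBcl 1 (by norm_num)) hB01 (hBsub t ht)
  set I : Set ℝ := {t | t ∈ Icc (0:ℝ) 1 ∧ B t ⊆ B 0} with hI_def
  set J : Set ℝ := {t | t ∈ Icc (0:ℝ) 1 ∧ B t ⊆ B 1} with hJ_def
  have hIJcover : Icc (0:ℝ) 1 ⊆ I ∪ J := by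
    intro t ht
    rcases hdich t ht with h | h
    · exact Or.inl ⟨ht, h⟩
    · exact Or.inr ⟨ht, h⟩
  have hIJdisj : Disjoint I J := by
    rw [Set.disjoint_left]
    rintro t ⟨ht, h0⟩ ⟨_, h1⟩
    obtain ⟨x, hx⟩ := hBne t ht
    exact Set.disjoint_left.mp hB01 (h0 hx) (h1 hx)
  -- closedness of I and J
  have hclosed : ∀ b : ℝ, (∀ t ∈ Icc (0:ℝ) 1, (B t ∩ B b).Nonempty → B t ⊆ B b) →
      IsClosed {t | t ∈ Icc (0:ℝ) 1 ∧ B t ⊆ B b} := by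
    intro b hmeet
    rw [← closure_subset_iff_isClosed]
    intro t ht
    have htI : t ∈ Icc (0:ℝ) 1 := by
      have : closure {t | t ∈ Icc (0:ℝ) 1 ∧ B t ⊆ B b} ⊆ Icc (0:ℝ) 1 :=
        closure_minimal (fun x hx => hx.1) isClosed_Icc
      exact this ht
    obtain ⟨st, hstS, hstc⟩ := hcon (θf t) (hθfK t htI)
    have hstBt : st ∈ B t := ⟨hstS, hstc.trans hc1.le⟩
    -- continuity of u ↦ L st (θf u) at t within Icc
    have hθfc : Continuous θf := by rw [hθf_def]; fun_prop
    have hgcont : ContinuousWithinAt (fun u => L st (θf u)) (Icc (0:ℝ) 1) t := by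
      have : ContinuousOn (fun u => L st (θf u)) (Icc (0:ℝ) 1) :=
        ContinuousOn.comp (g := fun p : ℝ × ℝ => L p.1 p.2) (f := fun u => (st, θf u))
          hLcont ((continuous_const.prodMk hθfc).continuousOn)
          (fun u hu => Set.mk_mem_prod (hSsub hstS) (hθfK u hu))
      exact this t htI
    have hub : L st (θf t) < c'' := lt_of_le_of_lt hstc hc1
    have hev : ∀ᶠ u in nhdsWithin t (Icc (0:ℝ) 1), L st (θf u) < c'' :=
      hgcont.eventually_lt_const hub
    have hevI : ∀ᶠ u in nhdsWithin t {u | u ∈ Icc (0:ℝ) 1 ∧ B u ⊆ B b},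
        L st (θf u) < c'' :=
      hev.filter_mono (nhdsWithin_mono t (fun x hx => hx.1))
    have hne : (nhdsWithin t {u | u ∈ Icc (0:ℝ) 1 ∧ B u ⊆ B b}).NeBot :=
      mem_closure_iff_nhdsWithin_neBot.mp ht
    obtain ⟨u, hult, huI⟩ := (hevI.and self_mem_nhdsWithin).exists
    have hstBu : st ∈ B u := ⟨hstS, hult.le⟩
    exact ⟨htI, hmeet t htI ⟨st, hstBt, huI.2 hstBu⟩⟩
  have hIclosed : IsClosed I := by
    apply hclosed 0
    intro t ht hne
    rcases hdich t ht with h | h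
    · exact h
    · obtain ⟨x, hx0, hxb⟩ := hne
      exact absurd hxb (fun hxb => Set.disjoint_left.mp hB01 hxb (h hx0))
  have hJclosed : IsClosed J := by
    apply hclosed 1
    intro t ht hne
    rcases hdich t ht with h | h
    · obtain ⟨x, hx0, hxb⟩ := hne
      exact absurd hxb (fun hxb => Set.disjoint_left.mp hB01 (h hx0) hxb)
    · exact h
  have h0I : (0:ℝ) ∈ I := ⟨by norm_num, le_refl _⟩
  have h1J : (1:ℝ) ∈ J := ⟨by norm_num, le_refl _⟩
  rcases precon_closed isPreconnected_Icc hIclosed hJclosed hIJdisj hIJcover with h | h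
  · exact Set.disjoint_left.mp hIJdisj (h (by norm_num : (1:ℝ) ∈ Icc (0:ℝ) 1)) h1J
  · exact Set.disjoint_left.mp hIJdisj h0I (h (by norm_num : (0:ℝ) ∈ Icc (0:ℝ) 1))

private lemma finset_point (L : ℝ → ℝ → ℝ)
    (hLcont : ContinuousOn (fun p : ℝ × ℝ => L p.1 p.2)
      (Set.Icc (0 : ℝ) 1 ×ˢ Set.Icc (0 : ℝ) 1))
    (hLconv : ∀ θ ∈ Set.Icc (0 : ℝ) 1, ConvexOn ℝ (Set.Icc (0 : ℝ) 1) (fun s => L s θ))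
    (hLconc : ∀ s ∈ Set.Icc (0 : ℝ) 1, ConcaveOn ℝ (Set.Icc (0 : ℝ) 1) (fun θ => L s θ))
    (c : ℝ) (T : Finset ℝ) :
    ∀ S : Set ℝ, (∀ θ ∈ T, θ ∈ Icc (0:ℝ) 1) → S ⊆ Icc (0:ℝ) 1 → IsClosed S →
      Convex ℝ S → (∀ s ∈ S, ∃ θ ∈ T, c < L s θ) →
      ∃ θ₀ ∈ Icc (0:ℝ) 1, ∀ s ∈ S, c < L s θ₀ := by
  have contS : ∀ θ ∈ Icc (0:ℝ) 1, ContinuousOn (fun s => L s θ) (Icc (0:ℝ) 1) := by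
    intro θ hθ
    exact hLcont.comp (Continuous.continuousOn (by fun_prop))
      (fun s hs => Set.mk_mem_prod hs hθ)
  induction T using Finset.induction_on with
  | empty =>
    intro S _ _ _ _ hc'
    refine ⟨0, by norm_num, fun s hs => ?_⟩
    obtain ⟨θ, hθ, _⟩ := hc' s hs
    simp at hθ
  | @insert a T ha ih =>
    intro S hmem hSsub hScl hSconv hc'
    have haK : a ∈ Icc (0:ℝ) 1 := hmem a (Finset.mem_insert_self a T)
    set S' : Set ℝ := {s ∈ S | L s a ≤ c} with hS'_def
    have hS'sub : S' ⊆ Icc (0:ℝ) 1 := fun s hs => hSsub hs.1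
    have hS'cl : IsClosed S' := by
      have : S' = S ∩ (fun s => L s a) ⁻¹' Iic c := by ext x; simp [hS'_def]
      rw [this]
      exact ((contS a haK).mono hSsub).preimage_isClosed_of_isClosed hScl isClosed_Iic
    have hS'conv : Convex ℝ S' := by
      have : S' = S ∩ {x | x ∈ Icc (0:ℝ) 1 ∧ L x a ≤ c} := by
        ext x
        constructor
        · rintro ⟨hxS, hx⟩; exact ⟨hxS, hSsub hxS, hx⟩
        · rintro ⟨hxS, _, hx⟩; exact ⟨hxS, hx⟩
      rw [this]
      exact hSconv.inter ((hLconv a haK).convex_le c)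
    have hc'' : ∀ s ∈ S', ∃ θ ∈ T, c < L s θ := by
      rintro s ⟨hsS, hsle⟩
      obtain ⟨θ, hθ, hlt⟩ := hc' s hsS
      rcases Finset.mem_insert.mp hθ with rfl | hθT
      · exact absurd hlt (not_lt.mpr hsle)
      · exact ⟨θ, hθT, hlt⟩
    obtain ⟨θ', hθ'K, hθ'⟩ := ih S' (fun θ hθ => hmem θ (Finset.mem_insert_of_mem hθ))
      hS'sub hS'cl hS'conv hc''
    apply two_point L hLcont hLconv hLconc S hSsub hScl hSconv θ' a hθ'K haK c
    intro s hs
    rcases le_or_gt (L s a) c with h | h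
    · exact lt_max_of_lt_left (hθ' s ⟨hs, h⟩)
    · exact lt_max_of_lt_right h

/-- The pair `([0,1], [0,1])` is solvable: every continuous convex-concave
function on the unit square satisfies the minimax identity. -/
theorem unit_square_solvable
    (L : ℝ → ℝ → ℝ)
    (hLcont : ContinuousOn (fun p : ℝ × ℝ => L p.1 p.2)
      (Set.Icc (0 : ℝ) 1 ×ˢ Set.Icc (0 : ℝ) 1))
    (hLconv : ∀ θ ∈ Set.Icc (0 : ℝ) 1, ConvexOn ℝ (Set.Icc (0 : ℝ) 1) (fun s => L s θ))
    (hLconc : ∀ s ∈ Set.Icc (0 : ℝ) 1, ConcaveOn ℝ (Set.Icc (0 : ℝ) 1) (fun θ => L s θ)) :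
    ⨅ s : Set.Icc (0 : ℝ) 1, ⨆ θ : Set.Icc (0 : ℝ) 1, L s θ
      = ⨆ θ : Set.Icc (0 : ℝ) 1, ⨅ s : Set.Icc (0 : ℝ) 1, L s θ := by
  haveI : Nonempty ↥(Icc (0:ℝ) 1) := ⟨⟨0, by norm_num⟩⟩
  have contS : ∀ θ ∈ Icc (0:ℝ) 1, ContinuousOn (fun s => L s θ) (Icc (0:ℝ) 1) := by
    intro θ hθ
    exact hLcont.comp (Continuous.continuousOn (by fun_prop))
      (fun s hs => Set.mk_mem_prod hs hθ)
  have contT : ∀ s ∈ Icc (0:ℝ) 1, ContinuousOn (fun θ => L s θ) (Icc (0:ℝ) 1) := by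
    intro s hs
    exact hLcont.comp (Continuous.continuousOn (by fun_prop))
      (fun θ hθ => Set.mk_mem_prod hs hθ)
  obtain ⟨M, hM⟩ := (isCompact_Icc.prod isCompact_Icc).exists_bound_of_continuousOn hLcont
  have hMb : ∀ s ∈ Icc (0:ℝ) 1, ∀ θ ∈ Icc (0:ℝ) 1, |L s θ| ≤ M := by
    intro s hs θ hθ
    have := hM (s, θ) ⟨hs, hθ⟩
    simpa [Real.norm_eq_abs] using this
  -- boundedness facts
  have bddA : ∀ s : ↥(Icc (0:ℝ) 1), BddAbove (range fun θ : ↥(Icc (0:ℝ) 1) => L s θ) := by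
    intro s
    refine ⟨M, ?_⟩
    rintro x ⟨θ, rfl⟩
    exact (abs_le.mp (hMb s s.2 θ θ.2)).2
  have bddB : ∀ θ : ↥(Icc (0:ℝ) 1), BddBelow (range fun s : ↥(Icc (0:ℝ) 1) => L s θ) := by
    intro θ
    refine ⟨-M, ?_⟩
    rintro x ⟨s, rfl⟩
    exact (abs_le.mp (hMb s s.2 θ θ.2)).1
  have bddSup : BddBelow (range fun s : ↥(Icc (0:ℝ) 1) => ⨆ θ : ↥(Icc (0:ℝ) 1), L s θ) := by
    refine ⟨-M, ?_⟩
    rintro x ⟨s, rfl⟩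
    calc (-M : ℝ) ≤ L s 0 := (abs_le.mp (hMb s s.2 0 (by norm_num))).1
    _ ≤ ⨆ θ : ↥(Icc (0:ℝ) 1), L s θ := le_ciSup (bddA s) ⟨0, by norm_num⟩
  have bddInf : BddAbove (range fun θ : ↥(Icc (0:ℝ) 1) => ⨅ s : ↥(Icc (0:ℝ) 1), L s θ) := by
    refine ⟨M, ?_⟩
    rintro x ⟨θ, rfl⟩
    calc ⨅ s : ↥(Icc (0:ℝ) 1), L s θ ≤ L 0 θ := ciInf_le (bddB θ) ⟨0, by norm_num⟩
    _ ≤ M := (abs_le.mp (hMb 0 (by norm_num) θ θ.2)).2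
  apply le_antisymm
  · -- hard direction
    apply le_of_forall_lt
    intro c hc
    have key : ∀ x : ℝ, ∃ θ0 ∈ Icc (0:ℝ) 1, ∃ V : Set ℝ, IsOpen V ∧ x ∈ V ∧
        ∀ s' ∈ V ∩ Icc (0:ℝ) 1, c < L s' θ0 := by
      intro x
      by_cases hx : x ∈ Icc (0:ℝ) 1
      · have h1 : c < ⨆ θ : ↥(Icc (0:ℝ) 1), L x θ :=
          lt_of_lt_of_le hc (ciInf_le bddSup ⟨x, hx⟩)
        obtain ⟨θ0, hθ0⟩ := exists_lt_of_lt_ciSup h1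
        have hcw : ContinuousWithinAt (fun s' => L s' (θ0 : ℝ)) (Icc (0:ℝ) 1) x :=
          contS θ0 θ0.2 x hx
        have hev : ∀ᶠ s' in nhdsWithin x (Icc (0:ℝ) 1), c < L s' θ0 :=
          hcw.eventually_const_lt hθ0
        rw [eventually_nhdsWithin_iff] at hev
        obtain ⟨V, hVsub, hVopen, hVmem⟩ := eventually_nhds_iff.mp hev
        exact ⟨θ0, θ0.2, V, hVopen, hVmem, fun s' hs' => hVsub s' hs'.1 hs'.2⟩
      · exact ⟨0, by norm_num, (Icc (0:ℝ) 1)ᶜ, isClosed_Icc.isOpen_compl, hx,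
          fun s' hs' => absurd hs'.2 hs'.1⟩
    choose θv hθv V hVopen hVmem hVprop using key
    obtain ⟨t, _, hcover⟩ := isCompact_Icc.elim_nhds_subcover V
      (fun x _ => (hVopen x).mem_nhds (hVmem x))
    have hc' : ∀ s ∈ Icc (0:ℝ) 1, ∃ θ ∈ t.image θv, c < L s θ := by
      intro s hs
      obtain ⟨x, hxt, hsV⟩ := Set.mem_iUnion₂.mp (hcover hs)
      exact ⟨θv x, Finset.mem_image_of_mem θv hxt, hVprop x s ⟨hsV, hs⟩⟩
    obtain ⟨θ₀, hθ₀K, hθ₀⟩ := finset_point L hLcont hLconv hLconc c (t.image θv)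
      (Icc (0:ℝ) 1)
      (by intro θ hθ; obtain ⟨x, _, rfl⟩ := Finset.mem_image.mp hθ; exact hθv x)
      (le_refl _) isClosed_Icc (convex_Icc 0 1) hc'
    obtain ⟨s₀, hs₀K, hs₀min⟩ := isCompact_Icc.exists_isMinOn ⟨0, by norm_num⟩
      (contS θ₀ hθ₀K)
    calc c < L s₀ θ₀ := hθ₀ s₀ hs₀K
    _ ≤ ⨅ s : ↥(Icc (0:ℝ) 1), L s θ₀ :=
        le_ciInf (fun s => isMinOn_iff.mp hs₀min s s.2)
    _ ≤ ⨆ θ : ↥(Icc (0:ℝ) 1), ⨅ s : ↥(Icc (0:ℝ) 1), L s θ :=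
        le_ciSup bddInf ⟨θ₀, hθ₀K⟩
  · -- easy direction
    apply ciSup_le
    intro θ
    apply le_ciInf
    intro s
    calc ⨅ s' : ↥(Icc (0:ℝ) 1), L s' θ ≤ L s θ := ciInf_le (bddB θ) s
    _ ≤ ⨆ θ' : ↥(Icc (0:ℝ) 1), L s θ' := le_ciSup (bddA s) θ
end

section
/- Let V and W be real vector spaces and let f : V → W be a function that preserves binary convex combinations: f(θ·x + (1−θ)·y) = θ·f(x) + (1−θ)·f(y) for all x, y ∈ V and all θ ∈ [0,1]. Then f preserves all binary affine combinations: f(θ·x + (1−θ)·y) = θ·f(x) + (1−θ)·f(y) for all x, y ∈ V and all θ ∈ ℝ; in particular, f is an affine map. -/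
set_option linter.unnecessarySimpa false

private lemma aux_ge_one {V W : Type*}
    [AddCommGroup V] [Module ℝ V] [AddCommGroup W] [Module ℝ W]
    (f : V → W)
    (hf : ∀ x y : V, ∀ θ ∈ Set.Icc (0 : ℝ) 1,
      f (θ • x + (1 - θ) • y) = θ • f x + (1 - θ) • f y) :
    ∀ x y : V, ∀ θ : ℝ, 1 ≤ θ →
      f (θ • x + (1 - θ) • y) = θ • f x + (1 - θ) • f y := by
  intro x y θ hθ
  have hθ0 : (0:ℝ) < θ := lt_of_lt_of_le one_pos hθ
  set z := θ • x + (1 - θ) • y with hz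
  have hmem : (1/θ) ∈ Set.Icc (0:ℝ) 1 := by
    constructor
    · positivity
    · rw [div_le_one hθ0]; exact hθ
  have key := hf z y (1/θ) hmem
  have hx : (1/θ) • z + (1 - 1/θ) • y = x := by
    rw [hz]
    have : θ ≠ 0 := ne_of_gt hθ0
    match_scalars <;> field_simp <;> ring
  rw [hx] at key
  have : θ • f x = θ • ((1/θ) • f z + (1 - 1/θ) • f y) := by rw [key]
  rw [smul_add, smul_smul, smul_smul, mul_one_div, div_self (ne_of_gt hθ0),
    one_smul] at this
  have goal : f z = θ • f x - (θ * (1 - 1/θ)) • f y := by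
    rw [this]; abel
  rw [goal]
  have : θ * (1 - 1/θ) = θ - 1 := by field_simp
  rw [this]
  match_scalars <;> ring

/-- Proposition efr-002O: a function between real vector spaces preserving
binary convex combinations preserves all binary affine combinations. -/
theorem convex_hom_is_affine {V W : Type*}
    [AddCommGroup V] [Module ℝ V] [AddCommGroup W] [Module ℝ W]
    (f : V → W)
    (hf : ∀ x y : V, ∀ θ ∈ Set.Icc (0 : ℝ) 1,
      f (θ • x + (1 - θ) • y) = θ • f x + (1 - θ) • f y) :
    ∀ x y : V, ∀ θ : ℝ, f (θ • x + (1 - θ) • y) = θ • f x + (1 - θ) • f y := by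
  intro x y θ
  rcases le_or_gt θ 0 with h | h
  · rcases lt_or_eq_of_le h with h' | h'
    · have h1 : 1 ≤ 1 - θ := by linarith
      have := aux_ge_one f hf y x (1 - θ) h1
      simpa [sub_sub_cancel, add_comm] using this
    · subst h'
      have := hf x y 0 ⟨le_refl 0, zero_le_one⟩
      simpa using this
  · rcases le_or_gt θ 1 with h2 | h2
    · exact hf x y θ ⟨le_of_lt h, h2⟩
    · exact aux_ge_one f hf x y θ (le_of_lt h2)
end

section
/- Let E be a finite-dimensional real normed vector space and let f : E → ℝ be a convex continuous function. Then, computing in the extended reals EReal, ⨆_{α : E →L[ℝ] ℝ} ⨅_{x ∈ E} ((f(x) − α(x) : ℝ) : EReal) = (f(0) : EReal). Moreover there exists a continuous linear functional α* : E →L[ℝ] ℝ such that f(0) + α*(x) ≤ f(x) for all x ∈ E. -/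
lemma exists_subgradient_at_zero {E : Type*}
    [NormedAddCommGroup E] [NormedSpace ℝ E]
    (f : E → ℝ) (hconv : ConvexOn ℝ Set.univ f) (hcont : Continuous f) :
    ∃ αs : E →L[ℝ] ℝ, ∀ x : E, f 0 + αs x ≤ f x := by
  set S : Set (E × ℝ) := {p : E × ℝ | f p.1 < p.2} with hS
  have hSconv : Convex ℝ S := by
    rintro ⟨x, r⟩ hx ⟨y, s⟩ hy a b ha hb hab
    simp only [hS, Set.mem_setOf_eq] at *
    calc f (a • x + b • y) ≤ a * f x + b * f y :=
          hconv.2 (Set.mem_univ x) (Set.mem_univ y) ha hb hab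
      _ < a * r + b * s := by
          rcases ha.lt_or_eq with ha' | ha'
          · rcases hb.lt_or_eq with hb' | hb'
            · exact add_lt_add (by nlinarith) (by nlinarith)
            · have hb0 : b = 0 := hb'.symm
              have ha1 : a = 1 := by linarith
              subst hb0; subst ha1; simpa using hx
          · have ha0 : a = 0 := ha'.symm
            have hb1 : b = 1 := by linarith
            subst ha0; subst hb1; simpa using hy
  have hSopen : IsOpen S := isOpen_lt (hcont.comp continuous_fst) continuous_snd
  have hx0 : ((0 : E), f 0) ∉ S := by simp [hS]
  obtain ⟨φ, hφ⟩ := geometric_hahn_banach_open_point hSconv hSopen hx0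
  set c : ℝ := φ (0, 1) with hc
  have hφ0 : φ ((0 : E), f 0) = f 0 * c := by
    have h : ((0 : E), f 0) = (f 0 : ℝ) • ((0 : E), (1:ℝ)) := by simp
    rw [h, map_smul, smul_eq_mul, ← hc]
  have key : ∀ (x : E) (t : ℝ), f x < t → φ (x, 0) + t * c < f 0 * c := by
    intro x t ht
    have h1 : φ (x, t) < φ ((0:E), f 0) := hφ (x, t) ht
    have hd : ((x, t) : E × ℝ) = (x, (0:ℝ)) + t • ((0:E), (1:ℝ)) := by simp
    rw [hd, map_add, map_smul, smul_eq_mul, ← hc, hφ0] at h1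
    exact h1
  have hφ00 : φ ((0:E), (0:ℝ)) = 0 := by exact map_zero φ
  have hc_neg : c < 0 := by
    rcases lt_trichotomy c 0 with h | h | h
    · exact h
    · have h1 := key 0 (f 0 + 1) (by linarith)
      rw [hφ00, h] at h1; simp at h1
    · have h1 := key 0 (max (f 0 + 1) (f 0 * c / c + 1)) (lt_of_lt_of_le (by linarith) (le_max_left _ _))
      rw [hφ00, zero_add] at h1
      have h2 : f 0 * c / c + 1 ≤ max (f 0 + 1) (f 0 * c / c + 1) := le_max_right _ _
      have h3 : f 0 * c / c = f 0 := by field_simp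
      nlinarith [mul_le_mul_of_nonneg_right h2 h.le]
  refine ⟨(-c⁻¹) • (φ.comp (ContinuousLinearMap.inl ℝ E ℝ)), fun x => ?_⟩
  have hle : φ (x, 0) + f x * c ≤ f 0 * c := by
    by_contra h
    push_neg at h
    set δ : ℝ := φ (x, 0) + f x * c - f 0 * c with hδ
    have hδpos : 0 < δ := by linarith
    have hεpos : 0 < δ / (-c) := div_pos hδpos (by linarith)
    have h1 := key x (f x + δ / (-c)) (by linarith)
    have hcne : c ≠ 0 := hc_neg.ne
    have hmc : (-c) ≠ 0 := by linarith
    have h4 : δ / (-c) * c = -δ := by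
      rw [div_neg, neg_mul, div_mul_cancel₀ δ hc_neg.ne]
    have h5 : (f x + δ / (-c)) * c = f x * c - δ := by rw [add_mul, h4]; ring
    rw [h5] at h1
    linarith
  have hval : ((-c⁻¹) • (φ.comp (ContinuousLinearMap.inl ℝ E ℝ))) x = -c⁻¹ * φ (x, 0) := by
    rfl
  rw [hval]
  have hinv : c⁻¹ * c = 1 := inv_mul_cancel₀ hc_neg.ne
  have hnn : (0:ℝ) ≤ -c⁻¹ := neg_nonneg.2 (inv_nonpos.2 hc_neg.le)
  have h2 := mul_le_mul_of_nonneg_left hle hnn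
  have e1 : -c⁻¹ * (φ (x, 0) + f x * c) = -c⁻¹ * φ (x, 0) - f x := by
    linear_combination (-f x) * hinv
  have e2 : -c⁻¹ * (f 0 * c) = -f 0 := by linear_combination (-f 0) * hinv
  rw [e1, e2] at h2
  linarith

/-- Proposition efr-001U: strong duality for the minmax problem `f|₀`:
`sup_α inf_x (f x - α x) = f 0`, and a subgradient of `f` at `0` exists. -/
theorem strong_duality_f_restricted_zero {E : Type*}
    [NormedAddCommGroup E] [NormedSpace ℝ E] [FiniteDimensional ℝ E]
    (f : E → ℝ) (hconv : ConvexOn ℝ Set.univ f) (hcont : Continuous f) :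
    (⨆ α : E →L[ℝ] ℝ, ⨅ x : E, ((f x - α x : ℝ) : EReal)) = (f 0 : EReal) ∧
    ∃ αs : E →L[ℝ] ℝ, ∀ x : E, f 0 + αs x ≤ f x := by
  obtain ⟨αs, hαs⟩ := exists_subgradient_at_zero f hconv hcont
  refine ⟨le_antisymm ?_ ?_, αs, hαs⟩
  · refine iSup_le fun α => ?_
    calc ⨅ x : E, ((f x - α x : ℝ) : EReal) ≤ ((f 0 - α 0 : ℝ) : EReal) := iInf_le _ 0
      _ = (f 0 : EReal) := by simp
  · refine le_trans ?_ (le_iSup _ αs)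
    refine le_iInf fun x => ?_
    exact EReal.coe_le_coe_iff.2 (by have := hαs x; linarith)
end

section
/- Let E be a finite-dimensional real normed vector space and let f : E → ℝ be a convex continuous function. Define the convex conjugate f* : (E →L[ℝ] ℝ) → EReal by f*(α) = ⨆_{z ∈ E} ((α(z) − f(z) : ℝ) : EReal). Then for every x ∈ E, (f(x) : EReal) = ⨆_{α : E →L[ℝ] ℝ} ( ((α(x) : ℝ) : EReal) − f*(α) ). -/
/-- Proposition efr-001V: for a continuous convex function on a
finite-dimensional space, the biconjugate equals the function:
`f x = sup_α (α x - f* α)` where `f* α = sup_z (α z - f z)`. -/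
theorem biconjugate_eq_self {E : Type*}
    [NormedAddCommGroup E] [NormedSpace ℝ E] [FiniteDimensional ℝ E]
    (f : E → ℝ) (hconv : ConvexOn ℝ Set.univ f) (hcont : Continuous f) :
    ∀ x : E, (f x : EReal) =
      ⨆ α : E →L[ℝ] ℝ, (((α x : ℝ) : EReal) - ⨆ z : E, ((α z - f z : ℝ) : EReal)) := by
  intro x
  -- the strict epigraph
  set s : Set (E × ℝ) := {p | f p.1 < p.2} with hs
  have hsopen : IsOpen s := isOpen_lt (hcont.comp continuous_fst) continuous_snd
  have hsconv : Convex ℝ s := by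
    rintro ⟨p1, p2⟩ hp ⟨q1, q2⟩ hq a b ha hb hab
    simp only [hs, Set.mem_setOf_eq] at *
    calc f (a • p1 + b • q1) ≤ a * f p1 + b * f q1 :=
          hconv.2 (Set.mem_univ _) (Set.mem_univ _) ha hb hab
      _ < a * p2 + b * q2 := by
          rcases ha.lt_or_eq with ha' | ha'
          · rcases hb.lt_or_eq with hb' | hb'
            · exact add_lt_add (by nlinarith) (by nlinarith)
            · subst hb'; simp only [zero_mul, add_zero]
              exact by nlinarith
          · subst ha'; simp only [zero_mul, zero_add] at *
            have hb1 : b = 1 := by linarith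
            subst hb1; simpa using hq
      _ = (a • (p1, p2) + b • (q1, q2)).2 := by simp
  have hxs : (x, f x) ∉ s := by simp [hs]
  obtain ⟨g, hg⟩ := geometric_hahn_banach_open_point hsconv hsopen hxs
  set c : ℝ := g (0, 1) with hc
  have hglin : ∀ z t, g (z, t) = g (z, 0) + t * c := by
    intro z t
    have : (z, t) = (z, (0:ℝ)) + t • ((0:E), (1:ℝ)) := by simp [Prod.ext_iff]
    rw [this, map_add, map_smul, smul_eq_mul]
  have hcneg : c < 0 := by
    have h1 := hg (x, f x + 1) (by simp [hs])
    rw [hglin x (f x + 1), hglin x (f x)] at h1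
    nlinarith
  -- key inequality: g(z, f z) ≤ g(x, f x)
  have hkey : ∀ z, g (z, 0) + f z * c ≤ g (x, 0) + f x * c := by
    intro z
    have : ∀ ε > 0, g (z, 0) + (f z + ε) * c < g (x, 0) + f x * c := by
      intro ε hε
      have := hg (z, f z + ε) (by simp [hs, hε])
      rwa [hglin z (f z + ε), hglin x (f x)] at this
    by_contra h
    push_neg at h
    have hc' : (0:ℝ) < -c := by linarith
    set δ := (g (z, 0) + f z * c) - (g (x, 0) + f x * c) with hδ
    have hδ0 : 0 < δ := by simp only [hδ]; linarith
    have hε : 0 < δ / (2 * (-c)) := div_pos hδ0 (by linarith)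
    have h2 := this (δ / (2 * (-c))) hε
    have hcne : c ≠ 0 := hcneg.ne
    have : δ / (2 * (-c)) * c = -(δ/2) := by field_simp
    nlinarith
  set α : E →L[ℝ] ℝ := (-c)⁻¹ • (g.comp (ContinuousLinearMap.inl ℝ E ℝ)) with hα
  have hαz : ∀ z, α z = (-c)⁻¹ * g (z, 0) := by intro z; simp [hα]
  have hsub : ∀ z, α z - f z ≤ α x - f x := by
    intro z
    rw [hαz, hαz]
    have hc' : (0:ℝ) < -c := by linarith
    rw [← sub_nonneg]
    have expand : (-c)⁻¹ * g (x, 0) - f x - ((-c)⁻¹ * g (z, 0) - f z)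
        = (-c)⁻¹ * ((g (x, 0) + f x * c) - (g (z, 0) + f z * c)) := by
      have hcne : c ≠ 0 := hcneg.ne
      field_simp
      ring
    rw [expand]
    exact mul_nonneg (inv_nonneg.2 hc'.le) (sub_nonneg.2 (hkey z))
  -- conjugate value at α
  have hconj : (⨆ z : E, ((α z - f z : ℝ) : EReal)) = ((α x - f x : ℝ) : EReal) := by
    apply le_antisymm
    · exact iSup_le fun z => EReal.coe_le_coe_iff.2 (hsub z)
    · exact le_iSup (fun z => ((α z - f z : ℝ) : EReal)) x
  apply le_antisymm
  · -- f x ≤ sup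
    have : (f x : EReal) = ((α x : ℝ) : EReal) - ⨆ z : E, ((α z - f z : ℝ) : EReal) := by
      rw [hconj, ← EReal.coe_sub]
      norm_num
    rw [this]
    exact le_iSup (fun α : E →L[ℝ] ℝ => ((α x : ℝ) : EReal) - ⨆ z, ((α z - f z : ℝ) : EReal)) α
  · apply iSup_le
    intro β
    have h1 : ((β x - f x : ℝ) : EReal) ≤ ⨆ z : E, ((β z - f z : ℝ) : EReal) :=
      le_iSup (fun z => ((β z - f z : ℝ) : EReal)) x
    calc ((β x : ℝ) : EReal) - ⨆ z : E, ((β z - f z : ℝ) : EReal)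
        ≤ ((β x : ℝ) : EReal) - ((β x - f x : ℝ) : EReal) :=
          EReal.sub_le_sub le_rfl h1
      _ = (f x : EReal) := by rw [← EReal.coe_sub]; norm_num
end

section
/- Let E ⊆ ℝ^p, B ⊆ ℝ^q, and A ⊆ ℝ^k be nonempty compact convex sets, and let T : ℝ^p → ℝ^q be an affine map with T(E) = B. Suppose: (i) for every continuous function L' : B × A → ℝ that is convex in its first argument and concave in its second argument, ⨅_{b ∈ B} ⨆_{a ∈ A} L'(b,a) = ⨆_{a ∈ A} ⨅_{b ∈ B} L'(b,a); and (ii) for every b ∈ B and every continuous function L'' : (E ∩ T⁻¹({b})) × A → ℝ that is convex in its first argument and concave in its second argument, ⨅_{e ∈ E ∩ T⁻¹({b})} ⨆_{a ∈ A} L''(e,a) = ⨆_{a ∈ A} ⨅_{e ∈ E ∩ T⁻¹({b})} L''(e,a). Then for every continuous function L : E × A → ℝ that is convex in its first argument and concave in its second argument, ⨅_{e ∈ E} ⨆_{a ∈ A} L(e,a) = ⨆_{a ∈ A} ⨅_{e ∈ E} L(e,a). -/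
open Filter Topology

set_option maxHeartbeats 1600000

private lemma aux_inf_attained {α : Type*} [TopologicalSpace α] {S : Set α}
    (hS : IsCompact S) (hne : S.Nonempty) {f : α → ℝ} (hf : ContinuousOn f S) :
    ∃ x ∈ S, (⨅ y : S, f y) = f x ∧ ∀ y ∈ S, f x ≤ f y := by
  haveI : Nonempty S := hne.to_subtype
  obtain ⟨x, hxS, hx⟩ := hS.exists_isMinOn hne hf
  have hbdd : BddBelow (Set.range fun y : S => f y) := by
    refine ⟨f x, ?_⟩; rintro _ ⟨y, rfl⟩; exact hx y.2
  exact ⟨x, hxS, le_antisymm (ciInf_le hbdd ⟨x, hxS⟩) (le_ciInf fun y => hx y.2),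
    fun y hy => hx hy⟩

private lemma aux_sup_attained {α : Type*} [TopologicalSpace α] {S : Set α}
    (hS : IsCompact S) (hne : S.Nonempty) {f : α → ℝ} (hf : ContinuousOn f S) :
    ∃ x ∈ S, (⨆ y : S, f y) = f x ∧ ∀ y ∈ S, f y ≤ f x := by
  haveI : Nonempty S := hne.to_subtype
  obtain ⟨x, hxS, hx⟩ := hS.exists_isMaxOn hne hf
  have hbdd : BddAbove (Set.range fun y : S => f y) := by
    refine ⟨f x, ?_⟩; rintro _ ⟨y, rfl⟩; exact hx y.2
  exact ⟨x, hxS, le_antisymm (ciSup_le fun y => hx y.2) (le_ciSup hbdd ⟨x, hxS⟩),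
    fun y hy => hx hy⟩

private lemma aux_continuousOn_inf_param {X Y : Type*} [MetricSpace X] [MetricSpace Y]
    {K : Set X} {S : Set Y} (hK : IsCompact K) (hKne : K.Nonempty) (hS : IsCompact S)
    {g : X → Y → ℝ} (hg : ContinuousOn (fun p : X × Y => g p.1 p.2) (K ×ˢ S)) :
    ContinuousOn (fun y => ⨅ x : K, g x y) S := by
  haveI : Nonempty K := hKne.to_subtype
  have hatt : ∀ y ∈ S, ∃ x ∈ K, (⨅ x : K, g x y) = g x y ∧ ∀ x' ∈ K, g x y ≤ g x' y := by
    intro y hy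
    exact aux_inf_attained hK hKne (f := fun x => g x y)
      (hg.comp (Continuous.continuousOn (continuous_id.prodMk continuous_const)) (fun x hx => ⟨hx, hy⟩))
  have hUC := (hK.prod hS).uniformContinuousOn_of_continuous hg
  rw [Metric.uniformContinuousOn_iff] at hUC
  rw [Metric.continuousOn_iff]
  intro y₀ hy₀ ε hε
  obtain ⟨δ, hδ, hδ'⟩ := hUC (ε / 2) (by linarith)
  refine ⟨δ, hδ, fun y hy hyd => ?_⟩
  have key : ∀ x ∈ K, |g x y - g x y₀| < ε / 2 := by
    intro x hx
    have := hδ' (x, y) ⟨hx, hy⟩ (x, y₀) ⟨hx, hy₀⟩ (by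
      rw [Prod.dist_eq]; simp only [dist_self]; exact max_lt hδ hyd)
    rwa [Real.dist_eq] at this
  obtain ⟨x₁, hx₁, hv₁, hm₁⟩ := hatt y hy
  obtain ⟨x₀, hx₀, hv₀, hm₀⟩ := hatt y₀ hy₀
  rw [Real.dist_eq, hv₁, hv₀, abs_lt]
  have k₀ := key x₀ hx₀
  have k₁ := key x₁ hx₁
  rw [abs_lt] at k₀ k₁
  have h1 := hm₁ x₀ hx₀
  have h2 := hm₀ x₁ hx₁
  constructor <;> linarith

private lemma aux_continuousOn_sup_param {X Y : Type*} [MetricSpace X] [MetricSpace Y]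
    {K : Set X} {S : Set Y} (hK : IsCompact K) (hKne : K.Nonempty) (hS : IsCompact S)
    {g : X → Y → ℝ} (hg : ContinuousOn (fun p : X × Y => g p.1 p.2) (K ×ˢ S)) :
    ContinuousOn (fun y => ⨆ x : K, g x y) S := by
  haveI : Nonempty K := hKne.to_subtype
  have hatt : ∀ y ∈ S, ∃ x ∈ K, (⨆ x : K, g x y) = g x y ∧ ∀ x' ∈ K, g x' y ≤ g x y := by
    intro y hy
    exact aux_sup_attained hK hKne (f := fun x => g x y)
      (hg.comp (Continuous.continuousOn (continuous_id.prodMk continuous_const)) (fun x hx => ⟨hx, hy⟩))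
  have hUC := (hK.prod hS).uniformContinuousOn_of_continuous hg
  rw [Metric.uniformContinuousOn_iff] at hUC
  rw [Metric.continuousOn_iff]
  intro y₀ hy₀ ε hε
  obtain ⟨δ, hδ, hδ'⟩ := hUC (ε / 2) (by linarith)
  refine ⟨δ, hδ, fun y hy hyd => ?_⟩
  have key : ∀ x ∈ K, |g x y - g x y₀| < ε / 2 := by
    intro x hx
    have := hδ' (x, y) ⟨hx, hy⟩ (x, y₀) ⟨hx, hy₀⟩ (by
      rw [Prod.dist_eq]; simp only [dist_self]; exact max_lt hδ hyd)
    rwa [Real.dist_eq] at this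
  obtain ⟨x₁, hx₁, hv₁, hm₁⟩ := hatt y hy
  obtain ⟨x₀, hx₀, hv₀, hm₀⟩ := hatt y₀ hy₀
  rw [Real.dist_eq, hv₁, hv₀, abs_lt]
  have k₀ := key x₀ hx₀
  have k₁ := key x₁ hx₁
  rw [abs_lt] at k₀ k₁
  have h1 := hm₁ x₀ hx₀
  have h2 := hm₀ x₁ hx₁
  constructor <;> linarith

/-- Proposition efr-002W (inductive step of the minimax theorem): if the base
pair `(B, A)` is solvable and every fiber pair `(E ∩ T⁻¹{b}, A)` of an affine
surjection `T : E → B` is solvable, then the total pair `(E, A)` is solvable. -/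
theorem solvable_of_base_and_fibers {p q k : ℕ}
    {E : Set (EuclideanSpace ℝ (Fin p))} {B : Set (EuclideanSpace ℝ (Fin q))}
    {A : Set (EuclideanSpace ℝ (Fin k))}
    (hEne : E.Nonempty) (hEcp : IsCompact E) (hEcv : Convex ℝ E)
    (hBne : B.Nonempty) (hBcp : IsCompact B) (hBcv : Convex ℝ B)
    (hAne : A.Nonempty) (hAcp : IsCompact A) (hAcv : Convex ℝ A)
    (T : EuclideanSpace ℝ (Fin p) →ᵃ[ℝ] EuclideanSpace ℝ (Fin q))
    (hT : T '' E = B)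
    (hbase : ∀ L' : EuclideanSpace ℝ (Fin q) → EuclideanSpace ℝ (Fin k) → ℝ,
      ContinuousOn (fun r : EuclideanSpace ℝ (Fin q) × EuclideanSpace ℝ (Fin k) =>
        L' r.1 r.2) (B ×ˢ A) →
      (∀ a ∈ A, ConvexOn ℝ B (fun b => L' b a)) →
      (∀ b ∈ B, ConcaveOn ℝ A (fun a => L' b a)) →
      ⨅ b : B, ⨆ a : A, L' b a = ⨆ a : A, ⨅ b : B, L' b a)
    (hfiber : ∀ b ∈ B,
      ∀ L'' : EuclideanSpace ℝ (Fin p) → EuclideanSpace ℝ (Fin k) → ℝ,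
      ContinuousOn (fun r : EuclideanSpace ℝ (Fin p) × EuclideanSpace ℝ (Fin k) =>
        L'' r.1 r.2) ((E ∩ T ⁻¹' {b}) ×ˢ A) →
      (∀ a ∈ A, ConvexOn ℝ (E ∩ T ⁻¹' {b}) (fun e => L'' e a)) →
      (∀ e ∈ E ∩ T ⁻¹' {b}, ConcaveOn ℝ A (fun a => L'' e a)) →
      ⨅ e : (E ∩ T ⁻¹' {b} : Set (EuclideanSpace ℝ (Fin p))), ⨆ a : A, L'' e a
        = ⨆ a : A, ⨅ e : (E ∩ T ⁻¹' {b} : Set (EuclideanSpace ℝ (Fin p))), L'' e a) :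
    ∀ L : EuclideanSpace ℝ (Fin p) → EuclideanSpace ℝ (Fin k) → ℝ,
      ContinuousOn (fun r : EuclideanSpace ℝ (Fin p) × EuclideanSpace ℝ (Fin k) =>
        L r.1 r.2) (E ×ˢ A) →
      (∀ a ∈ A, ConvexOn ℝ E (fun e => L e a)) →
      (∀ e ∈ E, ConcaveOn ℝ A (fun a => L e a)) →
      ⨅ e : E, ⨆ a : A, L e a = ⨆ a : A, ⨅ e : E, L e a := by
  intro L hL hLcv hLcc
  haveI : Nonempty E := hEne.to_subtype
  haveI : Nonempty B := hBne.to_subtype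
  haveI : Nonempty A := hAne.to_subtype
  obtain ⟨a₀, ha₀⟩ := id hAne
  have hTc : Continuous T := T.continuous_of_finiteDimensional
  -- global bounds on L over E × A
  obtain ⟨w, hwEA, hw⟩ := (hEcp.prod hAcp).exists_isMinOn (hEne.prod hAne) hL
  obtain ⟨v, hvEA, hv⟩ := (hEcp.prod hAcp).exists_isMaxOn (hEne.prod hAne) hL
  set lo := L w.1 w.2 with hlo_def
  set hi := L v.1 v.2 with hhi_def
  have hlo : ∀ e ∈ E, ∀ a ∈ A, lo ≤ L e a := fun e he a ha => hw (Set.mk_mem_prod he ha)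
  have hhi : ∀ e ∈ E, ∀ a ∈ A, L e a ≤ hi := fun e he a ha => hv (Set.mk_mem_prod he ha)
  -- fibers
  have hfib_ne : ∀ b ∈ B, (E ∩ T ⁻¹' {b}).Nonempty := by
    intro b hb
    rw [← hT] at hb
    obtain ⟨e, he, rfl⟩ := hb
    exact ⟨e, he, rfl⟩
  have hfib_cv : ∀ b : EuclideanSpace ℝ (Fin q), Convex ℝ (E ∩ T ⁻¹' {b}) :=
    fun b => hEcv.inter ((convex_singleton b).affine_preimage T)
  -- continuity of L in the first variable
  have hLa : ∀ a ∈ A, ContinuousOn (fun e => L e a) E := fun a ha =>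
    hL.comp (Continuous.continuousOn (continuous_id.prodMk continuous_const))
      (fun e he => ⟨he, ha⟩)
  -- boundedness packages
  have bddA_L : ∀ e ∈ E, BddAbove (Set.range fun a : A => L e a) := fun e he =>
    ⟨hi, by rintro _ ⟨a, rfl⟩; exact hhi e he a a.2⟩
  have bddE_L : ∀ a ∈ A, BddBelow (Set.range fun e : E => L e a) := fun a ha =>
    ⟨lo, by rintro _ ⟨e, rfl⟩; exact hlo e e.2 a ha⟩
  -- the penalized family
  set N : ℕ → EuclideanSpace ℝ (Fin q) → EuclideanSpace ℝ (Fin k) → ℝ :=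
    fun n b a => ⨅ e : E, (L e a + (n : ℝ) * dist (T e) b) with hN_def
  have hint_cont : ∀ (n : ℕ) (b : EuclideanSpace ℝ (Fin q)), ∀ a ∈ A,
      ContinuousOn (fun e => L e a + (n : ℝ) * dist (T e) b) E := fun n b a ha =>
    (hLa a ha).add ((continuous_const.mul (hTc.dist continuous_const)).continuousOn)
  have bddN : ∀ (n : ℕ) (b : EuclideanSpace ℝ (Fin q)), ∀ a ∈ A,
      BddBelow (Set.range fun e : E => L e a + (n : ℝ) * dist (T e) b) := by
    intro n b a ha
    refine ⟨lo, ?_⟩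
    rintro _ ⟨e, rfl⟩
    have h1 := hlo e e.2 a ha
    have h2 : (0 : ℝ) ≤ (n : ℝ) * dist (T e) b := mul_nonneg (Nat.cast_nonneg n) dist_nonneg
    dsimp only
    linarith
  have hN_att : ∀ (n : ℕ) (b : EuclideanSpace ℝ (Fin q)), ∀ a ∈ A,
      ∃ x ∈ E, N n b a = L x a + (n : ℝ) * dist (T x) b ∧
        ∀ e ∈ E, L x a + (n : ℝ) * dist (T x) b ≤ L e a + (n : ℝ) * dist (T e) b :=
    fun n b a ha => aux_inf_attained hEcp hEne (hint_cont n b a ha)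
  have hN_lo : ∀ (n : ℕ) (b : EuclideanSpace ℝ (Fin q)), ∀ a ∈ A, lo ≤ N n b a := by
    intro n b a ha
    refine le_ciInf fun e => ?_
    have h1 := hlo e e.2 a ha
    have h2 : (0 : ℝ) ≤ (n : ℝ) * dist (T e) b := mul_nonneg (Nat.cast_nonneg n) dist_nonneg
    linarith
  have hN_le : ∀ (n : ℕ) (b : EuclideanSpace ℝ (Fin q)), ∀ a ∈ A,
      ∀ e ∈ E, T e = b → N n b a ≤ L e a := by
    intro n b a ha e he hTe
    calc N n b a ≤ L e a + (n : ℝ) * dist (T e) b := ciInf_le (bddN n b a ha) ⟨e, he⟩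
    _ = L e a := by rw [hTe, dist_self, mul_zero, add_zero]
  have hN_hi : ∀ (n : ℕ), ∀ b ∈ B, ∀ a ∈ A, N n b a ≤ hi := by
    intro n b hb a ha
    obtain ⟨e, heE, heT⟩ := hfib_ne b hb
    exact (hN_le n b a ha e heE (Set.mem_singleton_iff.mp heT)).trans (hhi e heE a ha)
  have hN_mono : ∀ (m n : ℕ), m ≤ n → ∀ (b : EuclideanSpace ℝ (Fin q)), ∀ a ∈ A,
      N m b a ≤ N n b a := by
    intro m n hmn b a ha
    refine le_ciInf fun e => ?_
    calc N m b a ≤ L e a + (m : ℝ) * dist (T e) b := ciInf_le (bddN m b a ha) e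
    _ ≤ L e a + (n : ℝ) * dist (T e) b := by
        have hc : (m : ℝ) ≤ (n : ℝ) := Nat.cast_le.mpr hmn
        have hd : (0 : ℝ) ≤ dist (T (e : EuclideanSpace ℝ (Fin p))) b := dist_nonneg
        nlinarith
  -- continuity of N n on B ×ˢ A
  have hNcont : ∀ n : ℕ,
      ContinuousOn (fun r : EuclideanSpace ℝ (Fin q) × EuclideanSpace ℝ (Fin k) =>
        N n r.1 r.2) (B ×ˢ A) := by
    intro n
    have hg : ContinuousOn
        (fun w : EuclideanSpace ℝ (Fin p) ×
            (EuclideanSpace ℝ (Fin q) × EuclideanSpace ℝ (Fin k)) =>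
          L w.1 w.2.2 + (n : ℝ) * dist (T w.1) w.2.1) (E ×ˢ (B ×ˢ A)) := by
      refine ContinuousOn.add ?_ ?_
      · exact hL.comp
          (Continuous.continuousOn (continuous_fst.prodMk continuous_snd.snd))
          (fun w hw => ⟨hw.1, hw.2.2⟩)
      · exact (continuous_const.mul
          ((hTc.comp continuous_fst).dist continuous_snd.fst)).continuousOn
    exact aux_continuousOn_inf_param (g := fun e r => L e r.2 + (n : ℝ) * dist (T e) r.1)
      hEcp hEne (hBcp.prod hAcp) hg
  -- convexity in b
  have hNcv : ∀ n : ℕ, ∀ a ∈ A, ConvexOn ℝ B (fun b => N n b a) := by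
    intro n a ha
    refine ⟨hBcv, fun b₁ hb₁ b₂ hb₂ t s ht hs hts => ?_⟩
    obtain ⟨e₁, he₁, hv₁, -⟩ := hN_att n b₁ a ha
    obtain ⟨e₂, he₂, hv₂, -⟩ := hN_att n b₂ a ha
    have heE : t • e₁ + s • e₂ ∈ E := hEcv he₁ he₂ ht hs hts
    have hTcombo : T (t • e₁ + s • e₂) = t • T e₁ + s • T e₂ := Convex.combo_affine_apply hts
    have hdist : dist (T (t • e₁ + s • e₂)) (t • b₁ + s • b₂) ≤
        t * dist (T e₁) b₁ + s * dist (T e₂) b₂ := by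
      rw [hTcombo, dist_eq_norm, dist_eq_norm, dist_eq_norm]
      have heq : (t • T e₁ + s • T e₂) - (t • b₁ + s • b₂)
          = t • (T e₁ - b₁) + s • (T e₂ - b₂) := by module
      rw [heq]
      calc ‖t • (T e₁ - b₁) + s • (T e₂ - b₂)‖
          ≤ ‖t • (T e₁ - b₁)‖ + ‖s • (T e₂ - b₂)‖ := norm_add_le _ _
      _ = t * ‖T e₁ - b₁‖ + s * ‖T e₂ - b₂‖ := by
          rw [norm_smul, norm_smul, Real.norm_of_nonneg ht, Real.norm_of_nonneg hs]
    have hLcombo : L (t • e₁ + s • e₂) a ≤ t * L e₁ a + s * L e₂ a := by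
      have := (hLcv a ha).2 he₁ he₂ ht hs hts
      simpa [smul_eq_mul] using this
    have hle : N n (t • b₁ + s • b₂) a ≤ L (t • e₁ + s • e₂) a +
        (n : ℝ) * dist (T (t • e₁ + s • e₂)) (t • b₁ + s • b₂) :=
      ciInf_le (bddN n _ a ha) ⟨_, heE⟩
    have hnn : (0 : ℝ) ≤ (n : ℝ) := Nat.cast_nonneg n
    have hmul := mul_le_mul_of_nonneg_left hdist hnn
    simp only [smul_eq_mul]
    rw [hv₁, hv₂]
    linarith
  -- concavity in a
  have hNcc : ∀ n : ℕ, ∀ b ∈ B, ConcaveOn ℝ A (fun a => N n b a) := by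
    intro n b hb
    refine ⟨hAcv, fun a₁ ha₁ a₂ ha₂ t s ht hs hts => ?_⟩
    have ha' : t • a₁ + s • a₂ ∈ A := hAcv ha₁ ha₂ ht hs hts
    obtain ⟨e, heE, hval, -⟩ := hN_att n b _ ha'
    have h1 : N n b a₁ ≤ L e a₁ + (n : ℝ) * dist (T e) b := ciInf_le (bddN n b a₁ ha₁) ⟨e, heE⟩
    have h2 : N n b a₂ ≤ L e a₂ + (n : ℝ) * dist (T e) b := ciInf_le (bddN n b a₂ ha₂) ⟨e, heE⟩
    have hcc : t • L e a₁ + s • L e a₂ ≤ L e (t • a₁ + s • a₂) := (hLcc e heE).2 ha₁ ha₂ ht hs hts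
    have hkey : t * (L e a₁ + (n : ℝ) * dist (T e) b) + s * (L e a₂ + (n : ℝ) * dist (T e) b)
        = t * L e a₁ + s * L e a₂ + (n : ℝ) * dist (T e) b := by
      have hst : s = 1 - t := by linarith
      rw [hst]; ring
    simp only [smul_eq_mul] at hcc ⊢
    rw [hval]
    linarith [mul_le_mul_of_nonneg_left h1 ht, mul_le_mul_of_nonneg_left h2 hs]
  -- apply the base hypothesis to each penalized function
  have key_n : ∀ n : ℕ, (⨅ b : B, ⨆ a : A, N n b a) = ⨆ a : A, ⨅ b : B, N n b a :=
    fun n => hbase (fun b a => N n b a) (hNcont n) (hNcv n) (hNcc n)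
  set c := ⨆ a : A, ⨅ e : E, L e a with hc_def
  have bddA_infE : BddAbove (Set.range fun a : A => ⨅ e : E, L e a) := by
    refine ⟨hi, ?_⟩
    rintro _ ⟨a, rfl⟩
    obtain ⟨e₀, he₀⟩ := hEne
    exact (ciInf_le (bddE_L a a.2) ⟨e₀, he₀⟩).trans (hhi e₀ he₀ a a.2)
  -- Step A : the sup-inf of each penalized function is at most c
  have stepA : ∀ n : ℕ, (⨆ a : A, ⨅ b : B, N n b a) ≤ c := by
    intro n
    refine ciSup_le fun a => ?_
    refine le_trans ?_ (le_ciSup bddA_infE a)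
    refine le_ciInf fun e => ?_
    have hTeB : T e ∈ B := by rw [← hT]; exact ⟨e, e.2, rfl⟩
    have bddNb : BddBelow (Set.range fun b : B => N n b a) :=
      ⟨lo, by rintro _ ⟨b, rfl⟩; exact hN_lo n b a a.2⟩
    exact (ciInf_le bddNb ⟨T e, hTeB⟩).trans (hN_le n (T e) a a.2 e e.2 rfl)
  -- continuity of b ↦ ⨆ a, N n b a
  have hfncont : ∀ n : ℕ, ContinuousOn (fun b => ⨆ a : A, N n b a) B := by
    intro n
    have hswap : ContinuousOn
        (fun r : EuclideanSpace ℝ (Fin k) × EuclideanSpace ℝ (Fin q) =>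
          N n r.2 r.1) (A ×ˢ B) :=
      (hNcont n).comp continuous_swap.continuousOn (fun r hr => ⟨hr.2, hr.1⟩)
    exact aux_continuousOn_sup_param (g := fun a b => N n b a) hAcp hAne hBcp hswap
  have bddA_N : ∀ (n : ℕ), ∀ b ∈ B, BddAbove (Set.range fun a : A => N n b a) :=
    fun n b hb => ⟨hi, by rintro _ ⟨a, rfl⟩; exact hN_hi n b hb a a.2⟩
  -- the nested compact sets
  set Kset : ℕ → Set (EuclideanSpace ℝ (Fin q)) :=
    fun n => B ∩ (fun b => ⨆ a : A, N n b a) ⁻¹' Set.Iic c with hKset_def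
  have hK_closed : ∀ n, IsClosed (Kset n) := fun n =>
    (hfncont n).preimage_isClosed_of_isClosed hBcp.isClosed isClosed_Iic
  have hK_ne : ∀ n, (Kset n).Nonempty := by
    intro n
    obtain ⟨b, hbB, hval, -⟩ := aux_inf_attained hBcp hBne (hfncont n)
    refine ⟨b, hbB, ?_⟩
    simp only [Set.mem_preimage, Set.mem_Iic]
    calc (⨆ a : A, N n b a) = ⨅ b' : B, ⨆ a : A, N n b' a := hval.symm
    _ = ⨆ a : A, ⨅ b' : B, N n b' a := key_n n
    _ ≤ c := stepA n
  have hK_anti : ∀ n, Kset (n + 1) ⊆ Kset n := by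
    intro n b hb
    obtain ⟨hbB, hble⟩ := hb
    refine ⟨hbB, ?_⟩
    simp only [Set.mem_preimage, Set.mem_Iic] at hble ⊢
    refine le_trans (ciSup_le fun a => ?_) hble
    exact (hN_mono n (n + 1) (Nat.le_succ n) b a a.2).trans (le_ciSup (bddA_N (n + 1) b hbB) a)
  obtain ⟨bs, hbs⟩ := IsCompact.nonempty_iInter_of_sequence_nonempty_isCompact_isClosed
    Kset hK_anti hK_ne (hBcp.of_isClosed_subset (hK_closed 0) Set.inter_subset_left)
    hK_closed
  simp only [Set.mem_iInter] at hbs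
  have hbsB : bs ∈ B := (hbs 0).1
  have hbs_le : ∀ n, (⨆ a : A, N n bs a) ≤ c := fun n => (hbs n).2
  haveI hfibne : Nonempty ↥(E ∩ T ⁻¹' {bs}) := (hfib_ne bs hbsB).to_subtype
  -- Step E : the limit fiber infimum is at most c
  have stepE : ∀ a ∈ A, (⨅ e : ↥(E ∩ T ⁻¹' {bs}), L e a) ≤ c := by
    intro a ha
    have hn : ∀ n : ℕ, N n bs a ≤ c := fun n =>
      (le_ciSup (bddA_N n bs hbsB) ⟨a, ha⟩).trans (hbs_le n)
    have hsel : ∀ n : ℕ, ∃ e ∈ E, N n bs a = L e a + (n : ℝ) * dist (T e) bs := by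
      intro n
      obtain ⟨e, he, hv, -⟩ := hN_att n bs a ha
      exact ⟨e, he, hv⟩
    choose e heE hval using hsel
    have h1 : ∀ n : ℕ, L (e n) a + (n : ℝ) * dist (T (e n)) bs ≤ c := fun n => (hval n) ▸ hn n
    obtain ⟨x, hxE, φ, hφ, hconv⟩ := hEcp.tendsto_subseq heE
    have hLx : Filter.Tendsto (fun j => L (e (φ j)) a) Filter.atTop (nhds (L x a)) := by
      have hx : ContinuousWithinAt (fun e => L e a) E x := (hLa a ha) x hxE
      have htend : Filter.Tendsto (fun j => e (φ j)) Filter.atTop (nhdsWithin x E) :=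
        tendsto_nhdsWithin_of_tendsto_nhds_of_eventually_within _ hconv
          (Filter.Eventually.of_forall fun j => heE (φ j))
      exact hx.tendsto.comp htend
    have hdist0 : Filter.Tendsto (fun j => dist (T (e (φ j))) bs) Filter.atTop (nhds 0) := by
      have hb : ∀ j : ℕ, 1 ≤ φ j → dist (T (e (φ j))) bs ≤ (c - lo) / (φ j : ℝ) := by
        intro j hj
        have hφpos : (0 : ℝ) < (φ j : ℝ) := by exact_mod_cast Nat.lt_of_lt_of_le Nat.zero_lt_one hj
        rw [le_div_iff₀ hφpos]
        have hb1 := h1 (φ j)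
        have hb2 := hlo (e (φ j)) (heE _) a ha
        nlinarith
      refine squeeze_zero' (g := fun j => (c - lo) / (φ j : ℝ))
        (Filter.Eventually.of_forall fun j => dist_nonneg) ?_ ?_
      · filter_upwards [hφ.tendsto_atTop.eventually_ge_atTop 1] with j hj using hb j hj
      · exact (tendsto_const_div_atTop_nhds_zero_nat (c - lo)).comp hφ.tendsto_atTop
    have hTx : T x = bs := by
      have h1t : Filter.Tendsto (fun j => T (e (φ j))) Filter.atTop (nhds (T x)) :=
        (hTc.tendsto x).comp hconv
      have h2t : Filter.Tendsto (fun j => T (e (φ j))) Filter.atTop (nhds bs) :=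
        tendsto_iff_dist_tendsto_zero.mpr hdist0
      exact tendsto_nhds_unique h1t h2t
    have hLxc : L x a ≤ c := by
      refine le_of_tendsto hLx (Filter.Eventually.of_forall fun j => ?_)
      have hb1 := h1 (φ j)
      have hd : (0 : ℝ) ≤ (φ j : ℝ) * dist (T (e (φ j))) bs :=
        mul_nonneg (Nat.cast_nonneg _) dist_nonneg
      linarith
    have hxfib : x ∈ E ∩ T ⁻¹' {bs} := ⟨hxE, by simp [hTx]⟩
    have bddfib : BddBelow (Set.range fun e : ↥(E ∩ T ⁻¹' {bs}) => L e a) :=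
      ⟨lo, by rintro _ ⟨e, rfl⟩; exact hlo e e.2.1 a ha⟩
    exact (ciInf_le bddfib ⟨x, hxfib⟩).trans hLxc
  -- splitting the infimum over E along the fibers
  have g_lo : ∀ e ∈ E, lo ≤ ⨆ a : A, L e a := fun e he =>
    (hlo e he a₀ ha₀).trans (le_ciSup (bddA_L e he) ⟨a₀, ha₀⟩)
  have bddB2 : BddBelow (Set.range fun b : B =>
      ⨅ e : ↥(E ∩ T ⁻¹' {(b : EuclideanSpace ℝ (Fin q))}), ⨆ a : A, L e a) := by
    refine ⟨lo, ?_⟩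
    rintro _ ⟨b, rfl⟩
    haveI : Nonempty ↥(E ∩ T ⁻¹' {(b : EuclideanSpace ℝ (Fin q))}) := (hfib_ne b b.2).to_subtype
    exact le_ciInf fun e => g_lo e e.2.1
  have hsplit : (⨅ e : E, ⨆ a : A, L e a)
      = ⨅ b : B, ⨅ e : ↥(E ∩ T ⁻¹' {(b : EuclideanSpace ℝ (Fin q))}), ⨆ a : A, L e a := by
    have bddg : BddBelow (Set.range fun e : E => ⨆ a : A, L e a) :=
      ⟨lo, by rintro _ ⟨e, rfl⟩; exact g_lo e e.2⟩
    apply le_antisymm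
    · refine le_ciInf fun b => ?_
      haveI : Nonempty ↥(E ∩ T ⁻¹' {(b : EuclideanSpace ℝ (Fin q))}) := (hfib_ne b b.2).to_subtype
      refine le_ciInf fun e => ?_
      exact ciInf_le bddg ⟨e, e.2.1⟩
    · refine le_ciInf fun e => ?_
      have hTeB : T e ∈ B := by rw [← hT]; exact ⟨e, e.2, rfl⟩
      refine (ciInf_le bddB2 ⟨T e, hTeB⟩).trans ?_
      haveI : Nonempty ↥(E ∩ T ⁻¹' {T (e : EuclideanSpace ℝ (Fin p))}) :=
        (hfib_ne _ hTeB).to_subtype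
      show (⨅ e' : ↥(E ∩ T ⁻¹' {T (e : EuclideanSpace ℝ (Fin p))}), ⨆ a : A, L e' a)
        ≤ ⨆ a : A, L (e : EuclideanSpace ℝ (Fin p)) a
      have hmem : (e : EuclideanSpace ℝ (Fin p)) ∈ E ∩ T ⁻¹' {T (e : EuclideanSpace ℝ (Fin p))} :=
        ⟨e.2, rfl⟩
      refine ciInf_le ⟨lo, ?_⟩
        (⟨_, hmem⟩ : ↥(E ∩ T ⁻¹' {T (e : EuclideanSpace ℝ (Fin p))}))
      rintro _ ⟨e', rfl⟩
      exact g_lo e' e'.2.1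
  -- conclusion
  have le1 : c ≤ ⨅ e : E, ⨆ a : A, L e a := by
    refine le_ciInf fun e => ciSup_le fun a => ?_
    exact (ciInf_le (bddE_L a a.2) e).trans (le_ciSup (bddA_L e e.2) a)
  have le2 : (⨅ e : E, ⨆ a : A, L e a) ≤ c := by
    rw [hsplit]
    have hfe := hfiber bs hbsB L
      (hL.mono (Set.prod_mono Set.inter_subset_left subset_rfl))
      (fun a ha => (hLcv a ha).subset Set.inter_subset_left (hfib_cv bs))
      (fun e he => hLcc e he.1)
    refine le_trans (ciInf_le bddB2 ⟨bs, hbsB⟩) ?_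
    show (⨅ e : ↥(E ∩ T ⁻¹' {bs}), ⨆ a : A, L e a) ≤ c
    rw [hfe]
    exact ciSup_le fun a => stepE a a.2
  exact le_antisymm le2 le1
end

section
/- Let X ⊆ ℝ^m be a nonempty compact convex set, let A ⊆ ℝ^k be a nonempty convex set (not necessarily compact), and let L : X × A → ℝ be continuous, convex in its first argument (for each a ∈ A, x ↦ L(x,a) is convex on X) and concave in its second argument (for each x ∈ X, a ↦ L(x,a) is concave on A). Then, computing in the extended reals EReal, ⨅_{x ∈ X} ⨆_{a ∈ A} (L(x,a) : EReal) = ⨆_{a ∈ A} ⨅_{x ∈ X} (L(x,a) : EReal). -/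
open Set Filter Topology

section SionAux

variable {m k : ℕ}
variable {X : Set (EuclideanSpace ℝ (Fin m))} {A : Set (EuclideanSpace ℝ (Fin k))}
variable {L : EuclideanSpace ℝ (Fin m) → EuclideanSpace ℝ (Fin k) → ℝ}

/-- Componentwise continuity in the first variable. -/
private lemma cont_fst (hLcont : ContinuousOn (fun p :
      EuclideanSpace ℝ (Fin m) × EuclideanSpace ℝ (Fin k) => L p.1 p.2) (X ×ˢ A))
    {a : EuclideanSpace ℝ (Fin k)} (ha : a ∈ A) {Y : Set (EuclideanSpace ℝ (Fin m))}
    (hY : Y ⊆ X) : ContinuousOn (fun x => L x a) Y := by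
  have : ContinuousOn ((fun p : EuclideanSpace ℝ (Fin m) × EuclideanSpace ℝ (Fin k) =>
      L p.1 p.2) ∘ (fun x => (x, a))) Y :=
    hLcont.comp ((continuous_id.prodMk continuous_const).continuousOn)
      (fun x hx => ⟨hY hx, ha⟩)
  exact this

/-- The two-point Sion step: if `max (L x a₁) (L x a₂) > c` everywhere on a compact
convex `Y ⊆ X`, then some convex combination `b` of `a₁, a₂` satisfies `L x b > c`
everywhere on `Y`. -/
private lemma sion_two
    (hAcv : Convex ℝ A)
    (hLcont : ContinuousOn (fun p :
      EuclideanSpace ℝ (Fin m) × EuclideanSpace ℝ (Fin k) => L p.1 p.2) (X ×ˢ A))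
    (hLconv : ∀ a ∈ A, ConvexOn ℝ X (fun x => L x a))
    (hLconc : ∀ x ∈ X, ConcaveOn ℝ A (fun a => L x a))
    {Y : Set (EuclideanSpace ℝ (Fin m))} (hY : Y ⊆ X) (hYcp : IsCompact Y)
    (hYcv : Convex ℝ Y) {c : ℝ} {a1 a2 : EuclideanSpace ℝ (Fin k)}
    (ha1 : a1 ∈ A) (ha2 : a2 ∈ A)
    (h : ∀ x ∈ Y, c < max (L x a1) (L x a2)) :
    ∃ b ∈ A, ∀ x ∈ Y, c < L x b := by
  rcases Y.eq_empty_or_nonempty with rfl | hYne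
  · exact ⟨a1, ha1, by simp⟩
  -- choose c' with c < c' < max (L x a1) (L x a2) for all x ∈ Y
  have hg : ContinuousOn (fun x => max (L x a1) (L x a2)) Y :=
    (cont_fst hLcont ha1 hY).sup (cont_fst hLcont ha2 hY)
  obtain ⟨x0, hx0Y, hx0min⟩ := hYcp.exists_isMinOn hYne hg
  set M := max (L x0 a1) (L x0 a2) with hM
  have hcM : c < M := h x0 hx0Y
  set c' : ℝ := (c + M) / 2 with hc'
  have hcc' : c < c' := by simp only [hc']; linarith
  have hc'lt : ∀ x ∈ Y, c' < max (L x a1) (L x a2) := by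
    intro x hx
    have := isMinOn_iff.mp hx0min x hx
    simp only [hc']; linarith
  -- the segment from a1 to a2
  set bt : ℝ → EuclideanSpace ℝ (Fin k) := fun t => (1 - t) • a1 + t • a2 with hbt
  have hbtA : ∀ t ∈ Icc (0:ℝ) 1, bt t ∈ A := fun t ht =>
    hAcv ha1 ha2 (sub_nonneg.mpr ht.2) ht.1 (by ring)
  have hbtcont : Continuous bt := by
    simp only [hbt]; fun_prop
  have hbt0 : bt 0 = a1 := by simp [hbt]
  have hbt1 : bt 1 = a2 := by simp [hbt]
  set As : ℝ → Set (EuclideanSpace ℝ (Fin m)) := fun t => {x ∈ Y | L x (bt t) ≤ c} with hAs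
  set Bs : ℝ → Set (EuclideanSpace ℝ (Fin m)) := fun t => {x ∈ Y | L x (bt t) ≤ c'} with hBs
  set B1 : Set (EuclideanSpace ℝ (Fin m)) := {x ∈ Y | L x a1 ≤ c'} with hB1
  set B2 : Set (EuclideanSpace ℝ (Fin m)) := {x ∈ Y | L x a2 ≤ c'} with hB2
  have hclosed : ∀ a ∈ A, ∀ r : ℝ, IsClosed {x ∈ Y | L x a ≤ r} := by
    intro a ha r
    have : {x ∈ Y | L x a ≤ r} = Y ∩ (fun x => L x a) ⁻¹' Iic r := by
      ext x; simp [Set.mem_sep_iff]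
    rw [this]
    exact (cont_fst hLcont ha hY).preimage_isClosed_of_isClosed hYcp.isClosed isClosed_Iic
  have hB1closed : IsClosed B1 := hclosed a1 ha1 c'
  have hB2closed : IsClosed B2 := hclosed a2 ha2 c'
  have hB1cp : IsCompact B1 := hYcp.of_isClosed_subset hB1closed (sep_subset _ _)
  have hB2cp : IsCompact B2 := hYcp.of_isClosed_subset hB2closed (sep_subset _ _)
  have hdisj : Disjoint B1 B2 := by
    rw [Set.disjoint_left]
    rintro x ⟨hxY, h1⟩ ⟨-, h2⟩
    exact absurd (max_le h1 h2) (not_le.mpr (hc'lt x hxY))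
  obtain ⟨U1, U2, hU1o, hU2o, hB1U, hB2U, hU12⟩ :=
    SeparatedNhds.of_isCompact_isCompact hB1cp hB2cp hdisj
  -- Bs t ⊆ B1 ∪ B2 by concavity in the second variable
  have hBsub : ∀ t ∈ Icc (0:ℝ) 1, Bs t ⊆ B1 ∪ B2 := by
    rintro t ht x ⟨hxY, hxle⟩
    by_contra hx'
    simp only [Set.mem_union, hB1, hB2, Set.mem_sep_iff, not_or, not_and, not_le] at hx'
    have hL1 : c' < L x a1 := hx'.1 hxY
    have hL2 : c' < L x a2 := hx'.2 hxY
    have hconc := (hLconc x (hY hxY)).2 ha1 ha2 (sub_nonneg.mpr ht.2) ht.1 (by ring)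
    simp only [smul_eq_mul] at hconc
    nlinarith [mul_nonneg ht.1 (le_of_lt (sub_pos.2 hL2)),
      mul_nonneg (by linarith [ht.2] : (0:ℝ) ≤ 1 - t) (le_of_lt (sub_pos.2 hL1))]
  -- each Bs t is convex, hence lands entirely in B1 or B2
  have hBor : ∀ t ∈ Icc (0:ℝ) 1, Bs t ⊆ B1 ∨ Bs t ⊆ B2 := by
    intro t ht
    have hBconv : Convex ℝ (Bs t) := by
      have heq : Bs t = Y ∩ {x ∈ X | L x (bt t) ≤ c'} := by
        ext x
        simp only [hBs, Set.mem_sep_iff, Set.mem_inter_iff]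
        exact ⟨fun ⟨h1, h2⟩ => ⟨h1, hY h1, h2⟩, fun ⟨h1, _, h2⟩ => ⟨h1, h2⟩⟩
      rw [heq]
      exact hYcv.inter ((hLconv _ (hbtA t ht)).convex_le c')
    have hsubU : Bs t ⊆ U1 ∪ U2 :=
      (hBsub t ht).trans (Set.union_subset_union hB1U hB2U)
    rcases hBconv.isPreconnected.subset_or_subset hU1o hU2o hU12 hsubU with hu | hu
    · left
      intro x hx
      rcases hBsub t ht hx with hx1 | hx2
      · exact hx1
      · exact absurd (Set.disjoint_left.mp hU12 (hu hx) (hB2U hx2)) (fun f => f)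
    · right
      intro x hx
      rcases hBsub t ht hx with hx1 | hx2
      · exact absurd (Set.disjoint_left.mp hU12 (hB1U hx1) (hu hx)) (fun f => f)
      · exact hx2
  -- suppose for contradiction every As t is nonempty
  by_contra hcon
  push_neg at hcon
  have hAsne : ∀ t ∈ Icc (0:ℝ) 1, (As t).Nonempty := by
    intro t ht
    obtain ⟨x, hxY, hxle⟩ := hcon (bt t) (hbtA t ht)
    exact ⟨x, hxY, hxle⟩
  have hAsB : ∀ t, As t ⊆ Bs t := by
    rintro t x ⟨hxY, hxle⟩; exact ⟨hxY, hxle.trans hcc'.le⟩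
  set S1 : Set ℝ := {t ∈ Icc (0:ℝ) 1 | (As t).Nonempty ∧ As t ⊆ B1} with hS1
  set S2 : Set ℝ := {t ∈ Icc (0:ℝ) 1 | (As t).Nonempty ∧ As t ⊆ B2} with hS2
  have hSdisj : ∀ t, t ∈ S1 → t ∈ S2 → False := by
    rintro t ⟨-, ⟨x, hx⟩, hsub1⟩ ⟨-, -, hsub2⟩
    exact Set.disjoint_left.mp hdisj (hsub1 hx) (hsub2 hx)
  have hcover : Icc (0:ℝ) 1 ⊆ S1 ∪ S2 := by
    intro t ht
    rcases hBor t ht with hb | hb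
    · exact Or.inl ⟨ht, hAsne t ht, (hAsB t).trans hb⟩
    · exact Or.inr ⟨ht, hAsne t ht, (hAsB t).trans hb⟩
  have h0S1 : (0:ℝ) ∈ S1 := by
    refine ⟨⟨le_refl _, zero_le_one⟩, hAsne 0 ⟨le_refl _, zero_le_one⟩, ?_⟩
    rintro x ⟨hxY, hxle⟩
    rw [hbt0] at hxle
    exact ⟨hxY, hxle.trans hcc'.le⟩
  have h1S2 : (1:ℝ) ∈ S2 := by
    refine ⟨⟨zero_le_one, le_refl _⟩, hAsne 1 ⟨zero_le_one, le_refl _⟩, ?_⟩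
    rintro x ⟨hxY, hxle⟩
    rw [hbt1] at hxle
    exact ⟨hxY, hxle.trans hcc'.le⟩
  -- S1 and S2 are closed (sequential argument using joint continuity)
  have hSclosed : ∀ (B : Set (EuclideanSpace ℝ (Fin m))), IsClosed B → B ⊆ Y →
      IsClosed {t ∈ Icc (0:ℝ) 1 | (As t).Nonempty ∧ As t ⊆ B} ∨ True := fun _ _ _ => Or.inr trivial
  have key : ∀ (B B' : Set (EuclideanSpace ℝ (Fin m))), IsClosed B → Disjoint B B' →
      (∀ t ∈ Icc (0:ℝ) 1, Bs t ⊆ B ∨ Bs t ⊆ B') →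
      IsClosed {t ∈ Icc (0:ℝ) 1 | (As t).Nonempty ∧ As t ⊆ B} := by
    intro B B' hBc hBB' hor
    apply IsSeqClosed.isClosed
    intro u t hu hut
    have htIcc : t ∈ Icc (0:ℝ) 1 :=
      isClosed_Icc.mem_of_tendsto hut (Eventually.of_forall fun n => (hu n).1)
    choose x hxA using fun n => (hu n).2.1
    have hxY : ∀ n, x n ∈ Y := fun n => (hxA n).1
    obtain ⟨z, hzY, φ, hφ, hxz⟩ := hYcp.tendsto_subseq hxY
    have hzB : z ∈ B :=
      hBc.mem_of_tendsto hxz (Eventually.of_forall fun j => (hu (φ j)).2.2 (hxA (φ j)))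
    have hpair : Tendsto (fun j => (x (φ j), bt (u (φ j)))) atTop
        (𝓝[X ×ˢ A] (z, bt t)) := by
      rw [tendsto_nhdsWithin_iff]
      constructor
      · exact hxz.prodMk_nhds
          ((hbtcont.tendsto _).comp (hut.comp hφ.tendsto_atTop))
      · exact Eventually.of_forall fun j =>
          ⟨hY (hxY (φ j)), hbtA _ (hu (φ j)).1⟩
    have hLt : Tendsto (fun j => L (x (φ j)) (bt (u (φ j)))) atTop
        (𝓝 (L z (bt t))) :=
      (hLcont (z, bt t) ⟨hY hzY, hbtA t htIcc⟩).tendsto.comp hpair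
    have hzle : L z (bt t) ≤ c :=
      le_of_tendsto hLt (Eventually.of_forall fun j => (hxA (φ j)).2)
    have hzAs : z ∈ As t := ⟨hzY, hzle⟩
    refine ⟨htIcc, ⟨z, hzAs⟩, ?_⟩
    rcases hor t htIcc with hb | hb
    · exact (hAsB t).trans hb
    · exact absurd (Set.disjoint_left.mp hBB' hzB (hb (hAsB t hzAs))) (fun f => f)
  have hS1closed : IsClosed S1 := key B1 B2 hB1closed hdisj hBor
  have hS2closed : IsClosed S2 := key B2 B1 hB2closed hdisj.symm
    (fun t ht => (hBor t ht).symm)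
  -- contradiction with connectedness of [0,1]
  have hpc := isPreconnected_Icc (a := (0:ℝ)) (b := 1)
  obtain ⟨t, htIcc, ht1, ht2⟩ := hpc S2ᶜ S1ᶜ hS2closed.isOpen_compl hS1closed.isOpen_compl
    (by
      intro t ht
      rcases hcover ht with h1 | h2
      · exact Or.inl (fun h2 => hSdisj t h1 h2)
      · exact Or.inr (fun h1 => hSdisj t h1 h2))
    ⟨0, ⟨le_refl _, zero_le_one⟩, fun h2 => hSdisj 0 h0S1 h2⟩
    ⟨1, ⟨zero_le_one, le_refl _⟩, fun h1 => hSdisj 1 h1 h1S2⟩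
  rcases hcover htIcc with h1 | h2
  · exact ht2 h1
  · exact ht1 h2

/-- Finite Sion step: if for every `x ∈ Y` some element of the finite set `T ⊆ A`
has `L x a > c`, then a single `b ∈ A` works uniformly on `Y`. -/
private lemma sion_fin
    (hAne : A.Nonempty) (hAcv : Convex ℝ A)
    (hLcont : ContinuousOn (fun p :
      EuclideanSpace ℝ (Fin m) × EuclideanSpace ℝ (Fin k) => L p.1 p.2) (X ×ˢ A))
    (hLconv : ∀ a ∈ A, ConvexOn ℝ X (fun x => L x a))
    (hLconc : ∀ x ∈ X, ConcaveOn ℝ A (fun a => L x a))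
    {c : ℝ} (T : Finset (EuclideanSpace ℝ (Fin k))) (hT : (T : Set _) ⊆ A) :
    ∀ (Y : Set (EuclideanSpace ℝ (Fin m))), Y ⊆ X → IsCompact Y → Convex ℝ Y →
      (∀ x ∈ Y, ∃ a ∈ T, c < L x a) → ∃ b ∈ A, ∀ x ∈ Y, c < L x b := by
  classical
  induction T using Finset.induction with
  | empty =>
    intro Y _ _ _ hYall
    refine ⟨hAne.choose, hAne.choose_spec, fun x hx => ?_⟩
    obtain ⟨a, ha, -⟩ := hYall x hx
    exact absurd ha (by simp)
  | @insert a T haT ih =>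
    intro Y hYX hYcp hYcv hYall
    have haA : a ∈ A := hT (Finset.mem_coe.mpr (Finset.mem_insert_self a T))
    have hTA : (T : Set _) ⊆ A := fun b hb =>
      hT (Finset.mem_coe.mpr (Finset.mem_insert_of_mem (Finset.mem_coe.mp hb)))
    set Y' : Set (EuclideanSpace ℝ (Fin m)) := {x ∈ Y | L x a ≤ c} with hY'
    have hY'X : Y' ⊆ X := (sep_subset _ _).trans hYX
    have hY'closed : IsClosed Y' := by
      have : Y' = Y ∩ (fun x => L x a) ⁻¹' Iic c := by
        ext x; simp [hY', Set.mem_sep_iff]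
      rw [this]
      exact (cont_fst hLcont haA hYX).preimage_isClosed_of_isClosed
        hYcp.isClosed isClosed_Iic
    have hY'cp : IsCompact Y' := hYcp.of_isClosed_subset hY'closed (sep_subset _ _)
    have hY'cv : Convex ℝ Y' := by
      have heq : Y' = Y ∩ {x ∈ X | L x a ≤ c} := by
        ext x
        simp only [hY', Set.mem_sep_iff, Set.mem_inter_iff]
        exact ⟨fun ⟨h1, h2⟩ => ⟨h1, hYX h1, h2⟩, fun ⟨h1, _, h2⟩ => ⟨h1, h2⟩⟩
      rw [heq]
      exact hYcv.inter ((hLconv _ haA).convex_le c)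
    obtain ⟨b', hb'A, hb'⟩ := ih hTA Y' hY'X hY'cp hY'cv (by
      rintro x ⟨hxY, hxle⟩
      obtain ⟨a', ha'mem, ha'lt⟩ := hYall x hxY
      rcases Finset.mem_insert.mp ha'mem with rfl | hmem
      · exact absurd hxle (not_le.mpr ha'lt)
      · exact ⟨a', hmem, ha'lt⟩)
    apply sion_two hAcv hLcont hLconv hLconc hYX hYcp hYcv hb'A haA
    intro x hx
    by_cases hxa : L x a ≤ c
    · exact lt_of_lt_of_le (hb' x ⟨hx, hxa⟩) (le_max_left _ _)
    · exact lt_of_lt_of_le (not_le.mp hxa) (le_max_right _ _)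

end SionAux

/-- Corollary efr-002Y: if `X ⊆ ℝᵐ` is a nonempty compact convex set and
`A ⊆ ℝᵏ` is any nonempty convex set, then every continuous convex-concave
`L` on `X × A` satisfies the minimax identity in the extended reals. -/
theorem solvable_of_compact_first {m k : ℕ}
    {X : Set (EuclideanSpace ℝ (Fin m))} {A : Set (EuclideanSpace ℝ (Fin k))}
    (hXne : X.Nonempty) (hXcp : IsCompact X) (hXcv : Convex ℝ X)
    (hAne : A.Nonempty) (hAcv : Convex ℝ A)
    (L : EuclideanSpace ℝ (Fin m) → EuclideanSpace ℝ (Fin k) → ℝ)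
    (hLcont : ContinuousOn (fun p : EuclideanSpace ℝ (Fin m) × EuclideanSpace ℝ (Fin k) =>
      L p.1 p.2) (X ×ˢ A))
    (hLconv : ∀ a ∈ A, ConvexOn ℝ X (fun x => L x a))
    (hLconc : ∀ x ∈ X, ConcaveOn ℝ A (fun a => L x a)) :
    ⨅ x : X, ⨆ a : A, ((L x a : ℝ) : EReal) = ⨆ a : A, ⨅ x : X, ((L x a : ℝ) : EReal) := by
  haveI := hXne.to_subtype
  haveI := hAne.to_subtype
  refine le_antisymm ?_ (iSup_iInf_le_iInf_iSup fun (a : A) (x : X) => ((L x a : ℝ) : EReal))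
  by_contra hlt
  rw [not_le] at hlt
  obtain ⟨c, hc1, hc2⟩ := EReal.lt_iff_exists_real_btwn.mp hlt
  -- for every x ∈ X there is a ∈ A with c < L x a
  have key : ∀ x ∈ X, ∃ a ∈ A, c < L x a := by
    intro x hx
    have hxlt : (c : EReal) < ⨆ a : A, ((L x a : ℝ) : EReal) :=
      lt_of_lt_of_le hc2 (iInf_le _ (⟨x, hx⟩ : X))
    obtain ⟨a, ha⟩ := lt_iSup_iff.mp hxlt
    exact ⟨a, a.2, EReal.coe_lt_coe_iff.mp ha⟩
  -- compactness: finitely many a's suffice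
  set Z : A → Set (EuclideanSpace ℝ (Fin m)) := fun a => {x ∈ X | L x a ≤ c} with hZ
  have hZclosed : ∀ a : A, IsClosed (Z a) := by
    intro a
    have : Z a = X ∩ (fun x => L x a) ⁻¹' Set.Iic c := by
      ext x; simp [hZ, Set.mem_sep_iff]
    rw [this]
    exact (cont_fst hLcont a.2 (le_refl X)).preimage_isClosed_of_isClosed
      hXcp.isClosed isClosed_Iic
  have hempty : X ∩ ⋂ a : A, Z a = ∅ := by
    ext x
    simp only [Set.mem_inter_iff, Set.mem_iInter, Set.mem_empty_iff_false, iff_false, not_and]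
    intro hx hall
    obtain ⟨a, haA, halt⟩ := key x hx
    exact absurd ((hall ⟨a, haA⟩).2) (not_le.mpr halt)
  obtain ⟨t, ht⟩ := hXcp.elim_finite_subfamily_closed Z hZclosed hempty
  classical
  -- extract a finite set of elements of A
  set T : Finset (EuclideanSpace ℝ (Fin k)) := t.image Subtype.val with hT
  have hTA : (T : Set _) ⊆ A := by
    intro a ha
    simp only [hT, Finset.coe_image, Set.mem_image, Finset.mem_coe] at ha
    obtain ⟨a', -, rfl⟩ := ha
    exact a'.2
  have hfin : ∀ x ∈ X, ∃ a ∈ T, c < L x a := by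
    intro x hx
    by_contra hcontra
    push_neg at hcontra
    have : x ∈ X ∩ ⋂ a ∈ t, Z a := by
      refine ⟨hx, Set.mem_iInter₂.mpr fun a ha => ⟨hx, ?_⟩⟩
      exact hcontra a (Finset.mem_image_of_mem _ ha)
    rw [ht] at this
    exact this
  obtain ⟨b, hbA, hb⟩ := sion_fin hAne hAcv hLcont hLconv hLconc T hTA X (le_refl X)
    hXcp hXcv hfin
  -- contradiction: sup inf ≥ c
  have hsup : (c : EReal) ≤ ⨆ a : A, ⨅ x : X, ((L x a : ℝ) : EReal) := by
    refine le_trans ?_ (le_iSup _ (⟨b, hbA⟩ : A))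
    exact le_iInf fun x => EReal.coe_le_coe_iff.mpr (hb x x.2).le
  exact absurd hc1 (not_lt.mpr hsup)
end
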